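/- arXiv:1703.05856 — 12 statements merged into one kernel-verified Lean document; each statement's English description precedes it below -/
import Mathlib

section
/- The co-Reflected Gray Code Order on {0,1,...,m-1}^n (defined by: s is less than t iff at the first position k where they differ, either U_k is even and s_k < t_k, or U_k is odd and s_k > t_k, where U_k is the number of indices i < k with s_i nonzero and even) is a strict linear order on {0,1,...,m-1}^n. -/
/-- `s` (0-indexed) is a restricted growth function of length `n`:
`s 0 = 0` and each next entry is at most the max of previous entries plus 1. -/
def IsRGF (n : ℕ) (s : ℕ → ℕ) : Prop :=
  s 0 = 0 ∧ ∀ i, i + 1 < n → s (i + 1) ≤ (Finset.range (i + 1)).sup s + 1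

/-- membership in `R_n(b)`: restricted growth function bounded by `b`. -/
def InRnb (n b : ℕ) (s : ℕ → ℕ) : Prop :=
  IsRGF n s ∧ ∀ i < n, s i ≤ b

/-- membership in `R*_n(b)`: restricted growth function with maximum exactly `b`. -/
def InRnbStar (n b : ℕ) (s : ℕ → ℕ) : Prop :=
  IsRGF n s ∧ (∀ i < n, s i ≤ b) ∧ ∃ i < n, s i = b

/-- Reflected Gray Code Order on length-`n` sequences. -/
def rgcLt (n : ℕ) (s t : ℕ → ℕ) : Prop :=
  ∃ k < n, (∀ i < k, s i = t i) ∧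
    ((Even (∑ i ∈ Finset.range k, s i) ∧ s k < t k) ∨
     (Odd (∑ i ∈ Finset.range k, s i) ∧ t k < s k))

/-- `U_k`: number of indices `i < k` with `s i` nonzero and even. -/
def Uval (s : ℕ → ℕ) (k : ℕ) : ℕ :=
  ((Finset.range k).filter (fun i => s i ≠ 0 ∧ Even (s i))).card

/-- co-Reflected Gray Code Order on length-`n` sequences. -/
def coRgcLt (n : ℕ) (s t : ℕ → ℕ) : Prop :=
  ∃ k < n, (∀ i < k, s i = t i) ∧
    ((Even (Uval s k) ∧ s k < t k) ∨ (Odd (Uval s k) ∧ t k < s k))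


lemma Uval_congr {s t : ℕ → ℕ} {k : ℕ} (h : ∀ i < k, s i = t i) : Uval s k = Uval t k := by
  unfold Uval
  congr 1
  apply Finset.filter_congr
  intro i hi
  simp [h i (Finset.mem_range.mp hi)]

/-- the co-Reflected Gray Code Order is a strict linear order on `{0,…,m-1}^n`. -/
theorem stmt1 (m n : ℕ) (hm : 2 ≤ m) (hn : 1 ≤ n) :
    (∀ s : ℕ → ℕ, (∀ i < n, s i < m) → ¬ coRgcLt n s s) ∧
    (∀ s t u : ℕ → ℕ, (∀ i < n, s i < m) → (∀ i < n, t i < m) → (∀ i < n, u i < m) →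
      coRgcLt n s t → coRgcLt n t u → coRgcLt n s u) ∧
    (∀ s t : ℕ → ℕ, (∀ i < n, s i < m) → (∀ i < n, t i < m) →
      (∃ i < n, s i ≠ t i) → coRgcLt n s t ∨ coRgcLt n t s) := by
  refine ⟨?_, ?_, ?_⟩
  · rintro s _ ⟨k, _, _, (⟨_, hlt⟩ | ⟨_, hlt⟩)⟩ <;> exact lt_irrefl _ hlt
  · rintro s t u _ _ _ ⟨k₁, hk₁, heq₁, h₁⟩ ⟨k₂, hk₂, heq₂, h₂⟩
    rcases lt_trichotomy k₁ k₂ with hlt | heq | hgt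
    · refine ⟨k₁, hk₁, fun i hi => (heq₁ i hi).trans (heq₂ i (hi.trans hlt)), ?_⟩
      rw [← heq₂ k₁ hlt]
      exact h₁
    · subst heq
      have hU : Uval s k₁ = Uval t k₁ := Uval_congr heq₁
      refine ⟨k₁, hk₁, fun i hi => (heq₁ i hi).trans (heq₂ i hi), ?_⟩
      rcases h₁ with ⟨he, h₁⟩ | ⟨ho, h₁⟩
      · rcases h₂ with ⟨_, h₂⟩ | ⟨ho', _⟩
        · exact Or.inl ⟨he, h₁.trans h₂⟩
        · exact absurd (hU ▸ ho') (Nat.not_odd_iff_even.mpr he)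
      · rcases h₂ with ⟨he', _⟩ | ⟨_, h₂⟩
        · exact absurd (hU ▸ he') (Nat.not_even_iff_odd.mpr ho)
        · exact Or.inr ⟨ho, h₂.trans h₁⟩
    · refine ⟨k₂, hk₂, fun i hi => (heq₁ i (hi.trans hgt)).trans (heq₂ i hi), ?_⟩
      have hsk : s k₂ = t k₂ := heq₁ k₂ hgt
      have hU : Uval s k₂ = Uval t k₂ := Uval_congr fun i hi => heq₁ i (hi.trans hgt)
      rw [hU, hsk]
      exact h₂
  · rintro s t _ _ ⟨i, hi, hne⟩
    have hex : ∃ k, k < n ∧ s k ≠ t k := ⟨i, hi, hne⟩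
    classical
    obtain ⟨k, ⟨hkn, hkne⟩, hmin⟩ := Nat.lt_wfRel.wf.has_min _ hex
    have heq : ∀ j < k, s j = t j := by
      intro j hj
      by_contra hne'
      exact hmin j ⟨hj.trans hkn, hne'⟩ hj
    have hU : Uval s k = Uval t k := Uval_congr heq
    rcases Nat.even_or_odd (Uval s k) with he | ho
    · rcases lt_or_gt_of_ne hkne with h | h
      · exact Or.inl ⟨k, hkn, heq, Or.inl ⟨he, h⟩⟩
      · exact Or.inr ⟨k, hkn, fun j hj => (heq j hj).symm, Or.inl ⟨hU ▸ he, h⟩⟩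
    · rcases lt_or_gt_of_ne hkne with h | h
      · exact Or.inr ⟨k, hkn, fun j hj => (heq j hj).symm, Or.inr ⟨hU ▸ ho, h⟩⟩
      · exact Or.inl ⟨k, hkn, heq, Or.inr ⟨ho, h⟩⟩
end

section
/- Let b ≥ 1 be odd, k ≤ n-2, and let s = s_1...s_k be a prefix of some element of R_n(b). If t is the ≺-last sequence in R_n(b) with prefix s, and M = min{b, max{s_i}_{i=1}^k + 1}, then: (1) if ∑_{i=1}^k s_i is even and M is odd, t = s M 0...0; (2) if ∑_{i=1}^k s_i is even and M is even, t = s M (M+1) 0...0; (3) if ∑_{i=1}^k s_i is odd, t = s 0...0. -/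
/-- sum over `range j` of a function vanishing on `[m, j)` equals sum over `range m`. -/
private lemma sum_range_eq_of_zero (w : ℕ → ℕ) {m j : ℕ} (hmj : m ≤ j)
    (h2 : ∀ i, m ≤ i → i < j → w i = 0) :
    ∑ i ∈ Finset.range j, w i = ∑ i ∈ Finset.range m, w i := by
  rw [Finset.range_eq_Ico, ← Finset.sum_Ico_consecutive w (Nat.zero_le m) hmj,
    ← Finset.range_eq_Ico]
  have hz : ∑ i ∈ Finset.Ico m j, w i = 0 := Finset.sum_eq_zero (fun i hi => by
    rw [Finset.mem_Ico] at hi; exact h2 i hi.1 hi.2)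
  rw [hz, add_zero]

/-- form of the `≺`-last sequence of `R_n(b)` (`b` odd) with a fixed prefix. -/
theorem stmt3 (n b k : ℕ) (hbodd : Odd b) (hb1 : 1 ≤ b) (hk1 : 1 ≤ k) (hk : k + 2 ≤ n)
    (p t : ℕ → ℕ) (hp : InRnb n b p) (ht : InRnb n b t)
    (htp : ∀ i < k, t i = p i)
    (hlast : ∀ u : ℕ → ℕ, InRnb n b u → (∀ i < k, u i = p i) →
      (∀ i < n, u i = t i) ∨ rgcLt n u t) :
    (Even (∑ i ∈ Finset.range k, p i) → Odd (min b ((Finset.range k).sup p + 1)) →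
      t k = min b ((Finset.range k).sup p + 1) ∧ ∀ i, k < i → i < n → t i = 0) ∧
    (Even (∑ i ∈ Finset.range k, p i) → Even (min b ((Finset.range k).sup p + 1)) →
      t k = min b ((Finset.range k).sup p + 1) ∧
      t (k + 1) = min b ((Finset.range k).sup p + 1) + 1 ∧
      ∀ i, k + 1 < i → i < n → t i = 0) ∧
    (Odd (∑ i ∈ Finset.range k, p i) → ∀ i, k ≤ i → i < n → t i = 0) := by
  classical
  obtain ⟨⟨hp0, hpR⟩, hpb⟩ := hp
  obtain ⟨⟨ht0, htR⟩, htb⟩ := ht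
  set S := (Finset.range k).sup p with hS
  set M := min b (S + 1) with hM
  have hkn : k < n := by omega
  have hk1n : k + 1 < n := by omega
  have hsupt : (Finset.range k).sup t = S := by
    rw [hS]; exact Finset.sup_congr rfl (fun i hi => htp i (Finset.mem_range.mp hi))
  have htk : t k ≤ M := by
    have h1 := htR (k - 1) (by omega)
    rw [Nat.sub_add_cancel hk1, hsupt] at h1
    exact le_min (htb k hkn) h1
  have hMb : M ≤ b := min_le_left _ _
  have hMS : M ≤ S + 1 := min_le_right _ _
  -- generic: well-formedness of the prefix-respecting candidates
  have prefRGF : ∀ w : ℕ → ℕ, (∀ i < k, w i = p i) →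
      ∀ i, i + 1 < k → w (i + 1) ≤ (Finset.range (i + 1)).sup w + 1 := by
    intro w hwp i hi
    rw [hwp _ hi]
    calc p (i + 1) ≤ (Finset.range (i + 1)).sup p + 1 := hpR i (by omega)
      _ = (Finset.range (i + 1)).sup w + 1 := by
          congr 1
          exact (Finset.sup_congr rfl (fun j hj =>
            (hwp j (lt_of_lt_of_le (Finset.mem_range.mp hj) (by omega))).symm))
  have supw : ∀ w : ℕ → ℕ, (∀ i < k, w i = p i) → (Finset.range k).sup w = S := by
    intro w hwp
    rw [hS]; exact Finset.sup_congr rfl (fun i hi => hwp i (Finset.mem_range.mp hi))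
  refine ⟨?_, ?_, ?_⟩
  · -- Case 1: even prefix sum, M odd
    intro hev hModd
    set w : ℕ → ℕ := fun i => if i < k then p i else if i = k then M else 0 with hw
    have hwp : ∀ i < k, w i = p i := fun i hi => if_pos hi
    have hwk : w k = M := by simp only [hw]; split_ifs <;> omega
    have hwz : ∀ i, k < i → w i = 0 := by
      intro i hi; simp only [hw]; split_ifs <;> omega
    have hsumk : ∑ i ∈ Finset.range k, w i = ∑ i ∈ Finset.range k, p i :=
      Finset.sum_congr rfl (fun i hi => hwp i (Finset.mem_range.mp hi))
    have hwRnb : InRnb n b w := by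
      refine ⟨⟨by rw [hwp 0 hk1]; exact hp0, ?_⟩, ?_⟩
      · intro i hi
        by_cases h1 : i + 1 < k
        · exact prefRGF w hwp i h1
        by_cases h2 : i + 1 = k
        · rw [h2, hwk, supw w hwp]; omega
        · rw [hwz (i + 1) (by omega)]; exact Nat.zero_le _
      · intro i hi
        by_cases h1 : i < k
        · rw [hwp i h1]; exact hpb i (by omega)
        by_cases h2 : i = k
        · rw [h2, hwk]; exact hMb
        · rw [hwz i (by omega)]; exact Nat.zero_le _
    have hnot : ¬ rgcLt n w t := by
      rintro ⟨j, hjn, hagree, hcase⟩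
      have hne : w j ≠ t j := by
        rcases hcase with ⟨_, h⟩ | ⟨_, h⟩ <;> omega
      by_cases hjk : j < k
      · exact hne (by rw [hwp j hjk, htp j hjk])
      by_cases hjq : j = k
      · subst hjq
        rcases hcase with ⟨_, h⟩ | ⟨hodd', _⟩
        · rw [hwk] at h; omega
        · rw [hsumk] at hodd'
          exact (Nat.not_odd_iff_even.mpr hev) hodd'
      · have hjk1 : k + 1 ≤ j := by omega
        have hsum : ∑ i ∈ Finset.range j, w i = (∑ i ∈ Finset.range k, p i) + M := by
          rw [sum_range_eq_of_zero w hjk1 (fun i h1 h2 => hwz i (by omega)),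
            Finset.sum_range_succ, hsumk, hwk]
        rcases hcase with ⟨hev', _⟩ | ⟨_, h⟩
        · rw [hsum] at hev'
          exact (Nat.not_odd_iff_even.mpr hev') (hev.add_odd hModd)
        · rw [hwz j (by omega)] at h; omega
    rcases hlast w hwRnb hwp with heq | hlt
    · exact ⟨by rw [← heq k hkn, hwk], fun i hki hin => by rw [← heq i hin, hwz i hki]⟩
    · exact absurd hlt hnot
  · -- Case 2: even prefix sum, M even
    intro hev hMev
    have hMeqS : M = S + 1 := by
      have hne : M ≠ b := by
        intro h
        rw [Nat.even_iff] at hMev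
        rw [Nat.odd_iff] at hbodd
        omega
      omega
    have hMltb : M < b := by
      rw [Nat.even_iff] at hMev
      rw [Nat.odd_iff] at hbodd
      omega
    set w : ℕ → ℕ := fun i => if i < k then p i else if i = k then M
      else if i = k + 1 then M + 1 else 0 with hw
    have hwp : ∀ i < k, w i = p i := fun i hi => if_pos hi
    have hwk : w k = M := by simp only [hw]; split_ifs <;> omega
    have hwk1 : w (k + 1) = M + 1 := by simp only [hw]; split_ifs <;> omega
    have hwz : ∀ i, k + 1 < i → w i = 0 := by
      intro i hi; simp only [hw]; split_ifs <;> omega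
    have hsumk : ∑ i ∈ Finset.range k, w i = ∑ i ∈ Finset.range k, p i :=
      Finset.sum_congr rfl (fun i hi => hwp i (Finset.mem_range.mp hi))
    have hsupwk1 : (Finset.range (k + 1)).sup w = M := by
      rw [Finset.range_add_one, Finset.sup_insert, hwk, supw w hwp]
      omega
    have hwRnb : InRnb n b w := by
      refine ⟨⟨by rw [hwp 0 hk1]; exact hp0, ?_⟩, ?_⟩
      · intro i hi
        by_cases h1 : i + 1 < k
        · exact prefRGF w hwp i h1
        by_cases h2 : i + 1 = k
        · rw [h2, hwk, supw w hwp]; omega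
        by_cases h3 : i = k
        · subst h3; rw [hwk1, hsupwk1]
        · rw [hwz (i + 1) (by omega)]; exact Nat.zero_le _
      · intro i hi
        by_cases h1 : i < k
        · rw [hwp i h1]; exact hpb i (by omega)
        by_cases h2 : i = k
        · rw [h2, hwk]; exact hMb
        by_cases h3 : i = k + 1
        · rw [h3, hwk1]; omega
        · rw [hwz i (by omega)]; exact Nat.zero_le _
    have hnot : ¬ rgcLt n w t := by
      rintro ⟨j, hjn, hagree, hcase⟩
      have hne : w j ≠ t j := by
        rcases hcase with ⟨_, h⟩ | ⟨_, h⟩ <;> omega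
      by_cases hjk : j < k
      · exact hne (by rw [hwp j hjk, htp j hjk])
      by_cases hjq : j = k
      · subst hjq
        rcases hcase with ⟨_, h⟩ | ⟨hodd', _⟩
        · rw [hwk] at h; omega
        · rw [hsumk] at hodd'
          exact (Nat.not_odd_iff_even.mpr hev) hodd'
      by_cases hjq1 : j = k + 1
      · subst hjq1
        have htkM : t k = M := by rw [← hagree k (by omega), hwk]
        have hsuptk1 : (Finset.range (k + 1)).sup t = M := by
          rw [Finset.range_add_one, Finset.sup_insert, htkM, hsupt]
          omega
        have htk1 : t (k + 1) ≤ M + 1 := by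
          have h1 := htR k hk1n
          rw [hsuptk1] at h1
          exact h1
        have hsum : ∑ i ∈ Finset.range (k + 1), w i
            = (∑ i ∈ Finset.range k, p i) + M := by
          rw [Finset.sum_range_succ, hsumk, hwk]
        rcases hcase with ⟨_, h⟩ | ⟨hodd', _⟩
        · rw [hwk1] at h; omega
        · rw [hsum] at hodd'
          exact (Nat.not_odd_iff_even.mpr (hev.add hMev)) hodd'
      · have hjk2 : k + 2 ≤ j := by omega
        have hsum : ∑ i ∈ Finset.range j, w i
            = ((∑ i ∈ Finset.range k, p i) + M) + (M + 1) := by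
          rw [sum_range_eq_of_zero w hjk2 (fun i h1 h2 => hwz i (by omega)),
            Finset.sum_range_succ, Finset.sum_range_succ, hsumk, hwk, hwk1]
        rcases hcase with ⟨hev', _⟩ | ⟨_, h⟩
        · rw [hsum] at hev'
          have hodd2 : Odd ((∑ i ∈ Finset.range k, p i) + M + (M + 1)) :=
            (hev.add hMev).add_odd
              (by rw [Nat.even_iff] at hMev; rw [Nat.odd_iff]; omega)
          exact (Nat.not_odd_iff_even.mpr hev') hodd2
        · rw [hwz j (by omega)] at h; omega
    rcases hlast w hwRnb hwp with heq | hlt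
    · exact ⟨by rw [← heq k hkn, hwk], by rw [← heq (k + 1) hk1n, hwk1],
        fun i hki hin => by rw [← heq i hin, hwz i hki]⟩
    · exact absurd hlt hnot
  · -- Case 3: odd prefix sum
    intro hodd
    set w : ℕ → ℕ := fun i => if i < k then p i else 0 with hw
    have hwp : ∀ i < k, w i = p i := fun i hi => if_pos hi
    have hwz : ∀ i, k ≤ i → w i = 0 := by
      intro i hi; simp only [hw]; split_ifs <;> omega
    have hsumk : ∑ i ∈ Finset.range k, w i = ∑ i ∈ Finset.range k, p i :=
      Finset.sum_congr rfl (fun i hi => hwp i (Finset.mem_range.mp hi))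
    have hwRnb : InRnb n b w := by
      refine ⟨⟨by rw [hwp 0 hk1]; exact hp0, ?_⟩, ?_⟩
      · intro i hi
        by_cases h1 : i + 1 < k
        · exact prefRGF w hwp i h1
        · rw [hwz (i + 1) (by omega)]; exact Nat.zero_le _
      · intro i hi
        by_cases h1 : i < k
        · rw [hwp i h1]; exact hpb i (by omega)
        · rw [hwz i (by omega)]; exact Nat.zero_le _
    have hnot : ¬ rgcLt n w t := by
      rintro ⟨j, hjn, hagree, hcase⟩
      have hne : w j ≠ t j := by
        rcases hcase with ⟨_, h⟩ | ⟨_, h⟩ <;> omega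
      by_cases hjk : j < k
      · exact hne (by rw [hwp j hjk, htp j hjk])
      · have hsum : ∑ i ∈ Finset.range j, w i = ∑ i ∈ Finset.range k, p i := by
          rw [sum_range_eq_of_zero w (by omega : k ≤ j)
            (fun i h1 _ => hwz i h1), hsumk]
        rcases hcase with ⟨hev', _⟩ | ⟨_, h⟩
        · rw [hsum] at hev'
          exact (Nat.not_odd_iff_even.mpr hev') hodd
        · rw [hwz j (by omega)] at h; omega
    rcases hlast w hwRnb hwp with heq | hlt
    · exact fun i hki hin => by rw [← heq i hin, hwz i hki]
    · exact absurd hlt hnot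
end

section
/- Let b ≥ 1 be odd, k ≤ n-2, and let s = s_1...s_k be a prefix of some element of R_n(b). If t is the ≺-first sequence in R_n(b) with prefix s, and M = min{b, max{s_i}_{i=1}^k + 1}, then: (1) if ∑_{i=1}^k s_i is odd and M is odd, t = s M 0...0; (2) if ∑_{i=1}^k s_i is odd and M is even, t = s M (M+1) 0...0; (3) if ∑_{i=1}^k s_i is even, t = s 0...0. -/
/-
The candidate `p M 0…0`, `p M (M+1) 0…0` or `p 0…0` is an element of `R_n(b)` that no sequence
with prefix `p` precedes.  At a position where the prefix sum is even the candidate is `0`, so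
nothing can be smaller there; at a position where it is odd the candidate takes the largest value
the growth condition allows, so nothing can be larger there.  The prefix sum after `p M` is even
exactly when `M` is odd; when `M` is even, `M < b` because `b` is odd, so `M + 1` is still allowed
and makes the sum even again.
-/

open Finset Function

lemma inRnb_iff {n b : ℕ} {s : ℕ → ℕ} :
    InRnb n b s ↔ s 0 = 0 ∧ ∀ i < n, 0 < i → s i ≤ min b ((range i).sup s + 1) := by
  constructor
  · rintro ⟨⟨h0, hgrow⟩, hb⟩
    refine ⟨h0, fun i hi hi0 => le_min (hb i hi) ?_⟩
    obtain ⟨j, rfl⟩ := Nat.exists_eq_add_one_of_ne_zero hi0.ne'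
    exact hgrow j hi
  · rintro ⟨h0, h⟩
    refine ⟨⟨h0, fun i hi => (h (i + 1) hi i.succ_pos).trans (min_le_right _ _)⟩, fun i hi => ?_⟩
    rcases Nat.eq_zero_or_pos i with rfl | hi0
    · simp [h0]
    · exact (h i hi hi0).trans (min_le_left _ _)

lemma InRnb.apply_le_min {n b i : ℕ} {s : ℕ → ℕ} (hs : InRnb n b s) (hi0 : 0 < i) (hi : i < n) :
    s i ≤ min b ((range i).sup s + 1) :=
  (inRnb_iff.1 hs).2 i hi hi0

lemma InRnb.mono {m n b : ℕ} {s : ℕ → ℕ} (hs : InRnb n b s) (hmn : m ≤ n) : InRnb m b s :=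
  inRnb_iff.2 ⟨hs.1.1, fun _ hi hi0 => hs.apply_le_min hi0 (hi.trans_le hmn)⟩

lemma InRnb.sup_range_le_min {m b : ℕ} {s : ℕ → ℕ} (hs : InRnb m b s) :
    (range m).sup s ≤ min b ((range m).sup s + 1) :=
  le_min (Finset.sup_le fun i hi => hs.2 i (mem_range.1 hi)) (Nat.le_succ _)

lemma sup_range_congr {m : ℕ} {f g : ℕ → ℕ} (h : ∀ i < m, f i = g i) :
    (range m).sup f = (range m).sup g :=
  Finset.sup_congr rfl fun i hi => h i (mem_range.1 hi)

lemma sum_range_congr {m : ℕ} {f g : ℕ → ℕ} (h : ∀ i < m, f i = g i) :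
    ∑ i ∈ range m, f i = ∑ i ∈ range m, g i :=
  Finset.sum_congr rfl fun i hi => h i (mem_range.1 hi)

lemma InRnb.apply_le_min_of_agree {n b k : ℕ} {u q : ℕ → ℕ} (hu : InRnb n b u) (hk0 : 0 < k)
    (hkn : k < n) (hpre : ∀ i < k, u i = q i) : u k ≤ min b ((range k).sup q + 1) :=
  sup_range_congr hpre ▸ hu.apply_le_min hk0 hkn

lemma update_apply_of_lt {m v : ℕ} {s : ℕ → ℕ} : ∀ i < m, update s m v i = s i :=
  fun _ hi => update_of_ne hi.ne _ _

lemma sum_range_succ_update {m v : ℕ} {s : ℕ → ℕ} :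
    ∑ i ∈ range (m + 1), update s m v i = ∑ i ∈ range m, s i + v := by
  rw [sum_range_succ, update_self, sum_range_congr update_apply_of_lt]

lemma InRnb.update_of_le_min {m b v : ℕ} {s : ℕ → ℕ} (hs : InRnb m b s) (hm : 0 < m)
    (hv : v ≤ min b ((range m).sup s + 1)) : InRnb (m + 1) b (update s m v) := by
  refine inRnb_iff.2 ⟨by rw [update_apply_of_lt 0 hm]; exact hs.1.1, fun i hi hi0 => ?_⟩
  rw [sup_range_congr fun j hj => update_apply_of_lt j (hj.trans_le (Nat.lt_succ_iff.1 hi))]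
  rcases (Nat.lt_succ_iff.1 hi).lt_or_eq with hi | rfl
  · rw [update_apply_of_lt i hi]; exact hs.apply_le_min hi0 hi
  · rwa [update_self]

def padZeros (s : ℕ → ℕ) (m : ℕ) : ℕ → ℕ := fun i => if i < m then s i else 0

lemma padZeros_of_lt {s : ℕ → ℕ} {m i : ℕ} (h : i < m) : padZeros s m i = s i := if_pos h

lemma padZeros_of_le {s : ℕ → ℕ} {m i : ℕ} (h : m ≤ i) : padZeros s m i = 0 := if_neg h.not_gt

lemma sum_range_padZeros (s : ℕ → ℕ) (m j : ℕ) :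
    ∑ i ∈ range j, padZeros s m i = ∑ i ∈ range (min j m), s i := by
  induction j with
  | zero => simp
  | succ j ih =>
    rw [sum_range_succ, ih]
    rcases lt_or_ge j m with h | h
    · rw [padZeros_of_lt h, show min (j + 1) m = min j m + 1 by omega, sum_range_succ,
        show min j m = j by omega]
    · rw [padZeros_of_le h, show min (j + 1) m = min j m by omega, add_zero]

lemma InRnb.padZeros {m n b : ℕ} {s : ℕ → ℕ} (hs : InRnb m b s) : InRnb n b (padZeros s m) := by
  refine inRnb_iff.2 ⟨?_, fun i _ hi0 => ?_⟩
  · rcases Nat.eq_zero_or_pos m with rfl | hm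
    · exact padZeros_of_le le_rfl
    · rw [padZeros_of_lt hm]; exact hs.1.1
  · rcases lt_or_ge i m with h | h
    · rw [padZeros_of_lt h, sup_range_congr fun j hj => padZeros_of_lt (hj.trans h)]
      exact hs.apply_le_min hi0 h
    · rw [padZeros_of_le h]; exact Nat.zero_le _

lemma not_rgcLt_of_blocked {n : ℕ} {u c : ℕ → ℕ}
    (h : ∀ j < n, (∀ i < j, u i = c i) → u j ≠ c j →
      (Even (∑ i ∈ range j, c i) ∧ c j = 0) ∨ (Odd (∑ i ∈ range j, c i) ∧ u j ≤ c j)) :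
    ¬ rgcLt n u c := by
  rintro ⟨j, hjn, hagree, hlt⟩
  rw [sum_range_congr hagree] at hlt
  have hne : u j ≠ c j := by rcases hlt with ⟨-, h⟩ | ⟨-, h⟩ <;> omega
  rcases h j hjn hagree hne with ⟨he, hc⟩ | ⟨ho, hle⟩ <;>
    rcases hlt with ⟨he', hlt⟩ | ⟨ho', hlt⟩
  · omega
  · exact Nat.not_even_iff_odd.2 ho' he
  · exact Nat.not_even_iff_odd.2 ho he'
  · omega

lemma not_rgcLt_padZeros {n k m : ℕ} {u s : ℕ → ℕ} (hkm : k ≤ m) (hpre : ∀ i < k, u i = s i)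
    (heven : Even (∑ i ∈ range m, s i))
    (hmid : ∀ j, k ≤ j → j < m → j < n → (∀ i < j, u i = s i) →
      Odd (∑ i ∈ range j, s i) ∧ u j ≤ s j) :
    ¬ rgcLt n u (padZeros s m) := by
  refine not_rgcLt_of_blocked fun j hjn hagree hne => ?_
  rw [sum_range_padZeros]
  rcases lt_or_ge j k with hjk | hkj
  · exact absurd ((hpre j hjk).trans (padZeros_of_lt (hjk.trans_le hkm)).symm) hne
  rcases lt_or_ge j m with hjm | hmj
  · rw [min_eq_left hjm.le, padZeros_of_lt hjm]
    exact Or.inr <|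
      hmid j hkj hjm hjn fun i hi => (hagree i hi).trans (padZeros_of_lt (hi.trans hjm))
  · rw [min_eq_right hmj, padZeros_of_le hmj]
    exact Or.inl ⟨heven, rfl⟩

def IsRgcFirst (n b k : ℕ) (q c : ℕ → ℕ) : Prop :=
  InRnb n b c ∧ (∀ i < k, c i = q i) ∧
    ∀ u, InRnb n b u → (∀ i < k, u i = q i) → ¬ rgcLt n u c

lemma IsRgcFirst.eq {n b k : ℕ} {q c t : ℕ → ℕ} (hc : IsRgcFirst n b k q c) (ht : InRnb n b t)
    (htq : ∀ i < k, t i = q i)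
    (hfirst : ∀ u, InRnb n b u → (∀ i < k, u i = q i) → (∀ i < n, u i = t i) ∨ rgcLt n t u) :
    ∀ i < n, t i = c i := fun i hi =>
  ((hfirst c hc.1 hc.2.1).resolve_right (hc.2.2 t ht htq) i hi).symm

section Candidates

variable {n b k : ℕ} {q : ℕ → ℕ}

lemma isRgcFirst_of_even_sum (hq : InRnb k b q) (hS : Even (∑ i ∈ range k, q i)) :
    IsRgcFirst n b k q (padZeros q k) :=
  ⟨hq.padZeros, fun _ hi => padZeros_of_lt hi, fun _ _ hu =>
    not_rgcLt_padZeros le_rfl hu hS fun _ hkj hjk => absurd hjk hkj.not_gt⟩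

lemma pos_of_odd_sum (hS : Odd (∑ i ∈ range k, q i)) : 0 < k :=
  Nat.pos_of_ne_zero fun hk => by simp [hk] at hS

lemma isRgcFirst_of_odd_sum_of_odd (hq : InRnb k b q) (hS : Odd (∑ i ∈ range k, q i))
    (hM : Odd (min b ((range k).sup q + 1))) :
    IsRgcFirst n b k q (padZeros (update q k (min b ((range k).sup q + 1))) (k + 1)) := by
  set M := min b ((range k).sup q + 1)
  have hk0 := pos_of_odd_sum hS
  refine ⟨(hq.update_of_le_min hk0 le_rfl).padZeros,
    fun i hi => (padZeros_of_lt (by omega)).trans (update_apply_of_lt i hi), fun u hu hpre => ?_⟩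
  refine not_rgcLt_padZeros (Nat.le_succ k)
    (fun i hi => (hpre i hi).trans (update_apply_of_lt i hi).symm)
    (by rw [sum_range_succ_update]; exact hS.add_odd hM) fun j hkj hjk hjn _ => ?_
  obtain rfl : j = k := by omega
  rw [sum_range_congr update_apply_of_lt, update_self]
  exact ⟨hS, hu.apply_le_min_of_agree hk0 hjn hpre⟩

lemma isRgcFirst_of_odd_sum_of_even (hb : Odd b) (hq : InRnb k b q)
    (hS : Odd (∑ i ∈ range k, q i)) (hM : Even (min b ((range k).sup q + 1))) :
    IsRgcFirst n b k q (padZeros (update (update q k (min b ((range k).sup q + 1))) (k + 1)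
      (min b ((range k).sup q + 1) + 1)) (k + 2)) := by
  set M := min b ((range k).sup q + 1)
  have hk0 := pos_of_odd_sum hS
  have hsupM : (range k).sup q ≤ M := hq.sup_range_le_min
  -- `M` even and `b` odd force `M < b`, so `M = sup q + 1` and `M + 1` is admissible.
  have hMb : M + 1 ≤ b := by
    have : M ≠ b := fun h => Nat.not_even_iff_odd.2 hb (h ▸ hM)
    omega
  have hr : InRnb (k + 1) b (update q k M) := hq.update_of_le_min hk0 le_rfl
  have hsupr : (range (k + 1)).sup (update q k M) = M := by
    rw [range_add_one, sup_insert, update_self, sup_range_congr update_apply_of_lt]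
    exact sup_eq_left.2 hsupM
  have hrq : ∀ i < k, update (update q k M) (k + 1) (M + 1) i = q i := fun i hi =>
    (update_apply_of_lt i (by omega)).trans (update_apply_of_lt i hi)
  have hSM : Odd (∑ i ∈ range (k + 1), update q k M i) := by
    rw [sum_range_succ_update]; exact hS.add_even hM
  refine ⟨(hr.update_of_le_min (by omega) (by omega)).padZeros,
    fun i hi => (padZeros_of_lt (by omega)).trans (hrq i hi), fun u hu hpre => ?_⟩
  refine not_rgcLt_padZeros (by omega) (fun i hi => (hpre i hi).trans (hrq i hi).symm)
    (by rw [sum_range_succ_update]; exact hSM.add_odd (Even.add_one hM))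
    fun j hkj hjk hjn hagree => ?_
  rcases (show j = k ∨ j = k + 1 by omega) with rfl | rfl
  · rw [sum_range_congr hrq, update_of_ne (by omega), update_self]
    exact ⟨hS, hu.apply_le_min_of_agree hk0 hjn hpre⟩
  · rw [sum_range_congr update_apply_of_lt, update_self]
    refine ⟨hSM, ?_⟩
    have := hu.apply_le_min (by omega : 0 < k + 1) hjn
    rw [sup_range_congr fun i hi => (hagree i hi).trans (update_apply_of_lt i hi), hsupr] at this
    omega

end Candidates

theorem stmt4_general (n b k : ℕ) (hbodd : Odd b) (hk : k + 2 ≤ n)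
    (p t : ℕ → ℕ) (hp : InRnb n b p) (ht : InRnb n b t)
    (htp : ∀ i < k, t i = p i)
    (hfirst : ∀ u : ℕ → ℕ, InRnb n b u → (∀ i < k, u i = p i) →
      (∀ i < n, u i = t i) ∨ rgcLt n t u) :
    (Odd (∑ i ∈ Finset.range k, p i) → Odd (min b ((Finset.range k).sup p + 1)) →
      t k = min b ((Finset.range k).sup p + 1) ∧ ∀ i, k < i → i < n → t i = 0) ∧
    (Odd (∑ i ∈ Finset.range k, p i) → Even (min b ((Finset.range k).sup p + 1)) →
      t k = min b ((Finset.range k).sup p + 1) ∧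
      t (k + 1) = min b ((Finset.range k).sup p + 1) + 1 ∧
      ∀ i, k + 1 < i → i < n → t i = 0) ∧
    (Even (∑ i ∈ Finset.range k, p i) → ∀ i, k ≤ i → i < n → t i = 0) := by
  have hpk : InRnb k b p := hp.mono (by omega)
  have key : ∀ c, IsRgcFirst n b k p c → ∀ i < n, t i = c i := fun c hc => hc.eq ht htp hfirst
  refine ⟨fun hS hM => ?_, fun hS hM => ?_, fun hS i hki hin => ?_⟩
  · have h := key _ (isRgcFirst_of_odd_sum_of_odd hpk hS hM)
    refine ⟨by simpa [padZeros] using h k (by omega), fun i hki hin => ?_⟩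
    rw [h i hin, padZeros_of_le hki]
  · have h := key _ (isRgcFirst_of_odd_sum_of_even hbodd hpk hS hM)
    refine ⟨by simpa [padZeros] using h k (by omega),
      by simpa [padZeros] using h (k + 1) (by omega), fun i hki hin => ?_⟩
    rw [h i hin, padZeros_of_le hki]
  · rw [key _ (isRgcFirst_of_even_sum hpk hS) i hin, padZeros_of_le hki]

/-- form of the `≺`-first sequence of `R_n(b)` (`b` odd) with a fixed prefix. -/
theorem stmt4 (n b k : ℕ) (hbodd : Odd b) (hb1 : 1 ≤ b) (hk1 : 1 ≤ k) (hk : k + 2 ≤ n)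
    (p t : ℕ → ℕ) (hp : InRnb n b p) (ht : InRnb n b t)
    (htp : ∀ i < k, t i = p i)
    (hfirst : ∀ u : ℕ → ℕ, InRnb n b u → (∀ i < k, u i = p i) →
      (∀ i < n, u i = t i) ∨ rgcLt n t u) :
    (Odd (∑ i ∈ Finset.range k, p i) → Odd (min b ((Finset.range k).sup p + 1)) →
      t k = min b ((Finset.range k).sup p + 1) ∧ ∀ i, k < i → i < n → t i = 0) ∧
    (Odd (∑ i ∈ Finset.range k, p i) → Even (min b ((Finset.range k).sup p + 1)) →
      t k = min b ((Finset.range k).sup p + 1) ∧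
      t (k + 1) = min b ((Finset.range k).sup p + 1) + 1 ∧
      ∀ i, k + 1 < i → i < n → t i = 0) ∧
    (Even (∑ i ∈ Finset.range k, p i) → ∀ i, k ≤ i → i < n → t i = 0) :=
  stmt4_general n b k hbodd hk p t hp ht htp hfirst
end

section
/- For any n ≥ 1 and odd b ≥ 1, if s and t are consecutive sequences in the list of R_n(b) ordered by the Reflected Gray Code Order ≺, then s and t differ in at most 3 positions, and these positions are adjacent (contained in an interval of length 3). -/
/-- Replace entry `j` by `c` and everything after `j` by `0`. -/
def modif (v : ℕ → ℕ) (j c : ℕ) : ℕ → ℕ :=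
  fun i => if i < j then v i else if i = j then c else 0

lemma modif_lt (v : ℕ → ℕ) (j c i : ℕ) (h : i < j) : modif v j c i = v i := if_pos h

lemma modif_self (v : ℕ → ℕ) (j c : ℕ) : modif v j c j = c := by simp [modif]

lemma modif_sum (v : ℕ → ℕ) (j c m : ℕ) (h : m ≤ j) :
    ∑ i ∈ Finset.range m, modif v j c i = ∑ i ∈ Finset.range m, v i :=
  Finset.sum_congr rfl fun i hi =>
    modif_lt _ _ _ _ (lt_of_lt_of_le (Finset.mem_range.mp hi) h)

lemma modif_sup (v : ℕ → ℕ) (j c m : ℕ) (h : m ≤ j) :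
    (Finset.range m).sup (modif v j c) = (Finset.range m).sup v :=
  Finset.sup_congr rfl fun i hi =>
    modif_lt _ _ _ _ (lt_of_lt_of_le (Finset.mem_range.mp hi) h)

lemma modif_mem (n b : ℕ) (v : ℕ → ℕ) (hv : InRnb n b v) (j c : ℕ) (hj : 1 ≤ j)
    (hc1 : c ≤ (Finset.range j).sup v + 1) (hc2 : c ≤ b) : InRnb n b (modif v j c) := by
  obtain ⟨⟨h0, hgrow⟩, hb⟩ := hv
  refine ⟨⟨?_, ?_⟩, ?_⟩
  · rw [modif_lt v j c 0 hj]; exact h0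
  · intro i hi
    rcases lt_trichotomy (i + 1) j with h | h | h
    · rw [modif_lt v j c _ h, modif_sup v j c _ (le_of_lt h)]
      exact hgrow i hi
    · rw [h, modif_self, modif_sup v j c j le_rfl]
      exact hc1
    · have : modif v j c (i + 1) = 0 := by
        simp only [modif, if_neg (by omega : ¬ i + 1 < j), if_neg (by omega : ¬ i + 1 = j)]
      rw [this]; exact Nat.zero_le _
  · intro i hi
    rcases lt_trichotomy i j with h | h | h
    · rw [modif_lt v j c i h]; exact hb i hi
    · rw [h, modif_self]; exact hc2
    · have : modif v j c i = 0 := by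
        simp only [modif, if_neg (by omega : ¬ i < j), if_neg (by omega : ¬ i = j)]
      rw [this]; exact Nat.zero_le _

/-- Structure of a sequence that is maximal (in RGC order) among those sharing
its prefix up to position `k`. -/
lemma last_struct (n b k : ℕ) (v : ℕ → ℕ) (hv : InRnb n b v)
    (Hmax : ∀ u, InRnb n b u → (∀ i ≤ k, u i = v i) → ¬ rgcLt n v u)
    (j : ℕ) (hkj : k < j) (hjn : j < n) :
    (Odd (∑ i ∈ Finset.range j, v i) → v j = 0) ∧
    (Even (∑ i ∈ Finset.range j, v i) → v j = min b ((Finset.range j).sup v + 1)) := by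
  have hj1 : 1 ≤ j := by omega
  have hvj_sup : v j ≤ (Finset.range j).sup v + 1 := by
    obtain ⟨i, rfl⟩ : ∃ i, j = i + 1 := ⟨j - 1, by omega⟩
    exact hv.1.2 i hjn
  have hvj_b : v j ≤ b := hv.2 j hjn
  constructor
  · intro hodd
    by_contra h
    apply Hmax (modif v j 0) (modif_mem n b v hv j 0 hj1 (Nat.zero_le _) (Nat.zero_le _))
      (fun i hi => modif_lt v j 0 i (by omega))
    exact ⟨j, hjn, fun i hi => (modif_lt v j 0 i hi).symm,
      Or.inr ⟨hodd, by rw [modif_self]; omega⟩⟩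
  · intro heven
    set M := min b ((Finset.range j).sup v + 1) with hM
    have hle : v j ≤ M := le_min hvj_b hvj_sup
    rcases eq_or_lt_of_le hle with h | h
    · exact h
    exfalso
    apply Hmax (modif v j M) (modif_mem n b v hv j M hj1 (min_le_right _ _) (min_le_left _ _))
      (fun i hi => modif_lt v j M i (by omega))
    exact ⟨j, hjn, fun i hi => (modif_lt v j M i hi).symm,
      Or.inl ⟨heven, by rw [modif_self]; exact h⟩⟩

/-- Structure of a sequence that is minimal (in RGC order) among those sharing
its prefix up to position `k`. -/
lemma first_struct (n b k : ℕ) (v : ℕ → ℕ) (hv : InRnb n b v)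
    (Hmin : ∀ u, InRnb n b u → (∀ i ≤ k, u i = v i) → ¬ rgcLt n u v)
    (j : ℕ) (hkj : k < j) (hjn : j < n) :
    (Even (∑ i ∈ Finset.range j, v i) → v j = 0) ∧
    (Odd (∑ i ∈ Finset.range j, v i) → v j = min b ((Finset.range j).sup v + 1)) := by
  have hj1 : 1 ≤ j := by omega
  have hvj_sup : v j ≤ (Finset.range j).sup v + 1 := by
    obtain ⟨i, rfl⟩ : ∃ i, j = i + 1 := ⟨j - 1, by omega⟩
    exact hv.1.2 i hjn
  have hvj_b : v j ≤ b := hv.2 j hjn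
  constructor
  · intro heven
    by_contra h
    apply Hmin (modif v j 0) (modif_mem n b v hv j 0 hj1 (Nat.zero_le _) (Nat.zero_le _))
      (fun i hi => modif_lt v j 0 i (by omega))
    refine ⟨j, hjn, fun i hi => modif_lt v j 0 i hi, Or.inl ⟨?_, ?_⟩⟩
    · rw [modif_sum v j 0 j le_rfl]; exact heven
    · rw [modif_self]; omega
  · intro hodd
    set M := min b ((Finset.range j).sup v + 1) with hM
    have hle : v j ≤ M := le_min hvj_b hvj_sup
    rcases eq_or_lt_of_le hle with h | h
    · exact h
    exfalso
    apply Hmin (modif v j M) (modif_mem n b v hv j M hj1 (min_le_right _ _) (min_le_left _ _))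
      (fun i hi => modif_lt v j M i (by omega))
    refine ⟨j, hjn, fun i hi => modif_lt v j M i hi, Or.inr ⟨?_, ?_⟩⟩
    · rw [modif_sum v j M j le_rfl]; exact hodd
    · rw [modif_self]; exact h

/-- If a sequence has the max/min structure after position `k` (with parity offset `c`)
and `b` is odd, then it vanishes from position `k+3` on. -/
lemma zeros_from (b k n : ℕ) (hbodd : Odd b) (v : ℕ → ℕ) (c : ℕ)
    (hstruct : ∀ j, k < j → j < n →
      (Odd (c + ∑ i ∈ Finset.range j, v i) → v j = 0) ∧
      (Even (c + ∑ i ∈ Finset.range j, v i) → v j = min b ((Finset.range j).sup v + 1))) :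
    ∀ j, k + 3 ≤ j → j < n → v j = 0 := by
  have prop : ∀ m j0, k < j0 → Odd (c + ∑ i ∈ Finset.range j0, v i) →
      j0 + m < n → v (j0 + m) = 0 := by
    intro m
    induction m with
    | zero =>
      intro j0 hkj0 hodd hlt
      exact (hstruct j0 hkj0 (by omega)).1 hodd
    | succ m ih =>
      intro j0 hkj0 hodd hlt
      have h0 : v j0 = 0 := (hstruct j0 hkj0 (by omega)).1 hodd
      have hodd' : Odd (c + ∑ i ∈ Finset.range (j0 + 1), v i) := by
        rw [Finset.sum_range_succ, h0, add_zero]; exact hodd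
      have := ih (j0 + 1) (by omega) hodd' (by omega)
      rw [show j0 + (m + 1) = j0 + 1 + m by omega]
      exact this
  have prop' : ∀ j0 j, k < j0 → Odd (c + ∑ i ∈ Finset.range j0, v i) →
      j0 ≤ j → j < n → v j = 0 := by
    intro j0 j h1 h2 h3 h4
    have := prop (j - j0) j0 h1 h2 (by omega)
    rwa [show j0 + (j - j0) = j by omega] at this
  intro j hj hjn
  have hk1n : k + 1 < n := by omega
  rcases Nat.even_or_odd (c + ∑ i ∈ Finset.range (k + 1), v i) with he | ho
  · -- even at k+1
    have hk2n : k + 2 < n := by omega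
    have h1 : v (k + 1) = min b ((Finset.range (k + 1)).sup v + 1) :=
      (hstruct (k + 1) (by omega) hk1n).2 he
    have hsum2 : c + ∑ i ∈ Finset.range (k + 2), v i
        = (c + ∑ i ∈ Finset.range (k + 1), v i) + v (k + 1) := by
      rw [Finset.sum_range_succ]; ring
    rcases Nat.even_or_odd (c + ∑ i ∈ Finset.range (k + 2), v i) with he2 | ho2
    · -- even at k+2 : v (k+1) is even
      have hveven : Even (v (k + 1)) := by
        rw [hsum2] at he2
        rcases Nat.even_or_odd (v (k + 1)) with h | h
        · exact h
        · exfalso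
          have := Even.add_odd he h
          rw [Nat.odd_iff] at this
          rw [Nat.even_iff] at he2
          omega
      have hvne : v (k + 1) ≠ b := by
        intro h
        rw [h] at hveven
        rw [Nat.odd_iff] at hbodd
        rw [Nat.even_iff] at hveven
        omega
      have hveq : v (k + 1) = (Finset.range (k + 1)).sup v + 1 := by
        rcases le_total b ((Finset.range (k + 1)).sup v + 1) with h | h
        · exfalso; exact hvne (by rw [h1]; exact min_eq_left h)
        · rw [h1]; exact min_eq_right h
      have hsup2 : (Finset.range (k + 2)).sup v = v (k + 1) := by
        rw [Finset.range_add_one, Finset.sup_insert]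
        exact sup_eq_left.mpr (by omega)
      have h2v : v (k + 2) = min b ((Finset.range (k + 2)).sup v + 1) :=
        (hstruct (k + 2) (by omega) hk2n).2 he2
      have hodd2 : Odd (v (k + 2)) := by
        rw [h2v, hsup2]
        rcases le_total b (v (k + 1) + 1) with h | h
        · rw [min_eq_left h]; exact hbodd
        · rw [min_eq_right h]; exact Even.add_one hveven
      have ho3 : Odd (c + ∑ i ∈ Finset.range (k + 3), v i) := by
        have : c + ∑ i ∈ Finset.range (k + 3), v i
            = (c + ∑ i ∈ Finset.range (k + 2), v i) + v (k + 2) := by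
          rw [Finset.sum_range_succ]; ring
        rw [this]
        exact Even.add_odd he2 hodd2
      exact prop' (k + 3) j (by omega) ho3 hj hjn
    · exact prop' (k + 2) j (by omega) ho2 (by omega) hjn
  · exact prop' (k + 1) j (by omega) ho (by omega) hjn

/-- for odd `b`, consecutive elements of `R_n(b)` in `≺` order differ
in at most 3 adjacent positions. -/
theorem stmt5 (n b : ℕ) (hn : 1 ≤ n) (hbodd : Odd b) (hb1 : 1 ≤ b)
    (s t : ℕ → ℕ) (hs : InRnb n b s) (ht : InRnb n b t)
    (hst : rgcLt n s t)
    (hcons : ¬ ∃ u, InRnb n b u ∧ rgcLt n s u ∧ rgcLt n u t) :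
    ∃ k, ∀ i < n, s i ≠ t i → k ≤ i ∧ i < k + 3 := by
  obtain ⟨k, hkn, hagree, hcase⟩ := hst
  have Hmax : ∀ u, InRnb n b u → (∀ i ≤ k, u i = s i) → ¬ rgcLt n s u := by
    intro u hu hpref hlt
    refine hcons ⟨u, hu, hlt, k, hkn,
      fun i hi => (hpref i (le_of_lt hi)).trans (hagree i hi), ?_⟩
    have hsum : ∑ i ∈ Finset.range k, u i = ∑ i ∈ Finset.range k, s i :=
      Finset.sum_congr rfl fun i hi => hpref i (le_of_lt (Finset.mem_range.mp hi))
    rw [hsum, hpref k le_rfl]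
    exact hcase
  have Hmin : ∀ u, InRnb n b u → (∀ i ≤ k, u i = t i) → ¬ rgcLt n u t := by
    intro u hu hpref hlt
    refine hcons ⟨u, hu, ⟨k, hkn,
      fun i hi => (hagree i hi).symm ▸ (hpref i (le_of_lt hi)).symm, ?_⟩, hlt⟩
    rw [hpref k le_rfl]
    exact hcase
  have hs3 : ∀ j, k + 3 ≤ j → j < n → s j = 0 := by
    apply zeros_from b k n hbodd s 0
    intro j hkj hjn
    have := last_struct n b k s hs Hmax j hkj hjn
    simpa only [zero_add] using this
  have ht3 : ∀ j, k + 3 ≤ j → j < n → t j = 0 := by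
    apply zeros_from b k n hbodd t 1
    intro j hkj hjn
    have := first_struct n b k t ht Hmin j hkj hjn
    constructor
    · intro h
      apply this.1
      rw [Nat.odd_iff] at h; rw [Nat.even_iff]; omega
    · intro h
      apply this.2
      rw [Nat.even_iff] at h; rw [Nat.odd_iff]; omega
  refine ⟨k, fun i hin hne => ⟨?_, ?_⟩⟩
  · by_contra h
    exact hne (hagree i (by omega))
  · by_contra h
    exact hne ((hs3 i (by omega) hin).trans (ht3 i (by omega) hin).symm)
end

section
/- Let b ≥ 2 be even, k ≤ n-2, and let s = s_1...s_k be a prefix of some element of R_n(b). Let U = |{i ≤ k : s_i ≠ 0 and s_i even}| and M = min{b, max{s_i}_{i=1}^k + 1}. If t is the last sequence (under the co-Reflected Gray Code Order) in R_n(b) with prefix s, then: (1) if U is even and M is even, t = s M 0...0; (2) if U is even and M is odd, t = s M (M+1) 0...0; (3) if U is odd, t = s 0...0. -/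
lemma sup_congr_range {k : ℕ} {u v : ℕ → ℕ} (h : ∀ i < k, u i = v i) :
    (Finset.range k).sup u = (Finset.range k).sup v :=
  Finset.sup_congr rfl fun i hi => h i (Finset.mem_range.mp hi)

lemma uval_congr {k : ℕ} {u v : ℕ → ℕ} (h : ∀ i < k, u i = v i) : Uval u k = Uval v k := by
  unfold Uval
  congr 1
  apply Finset.filter_congr
  intro i hi
  rw [h i (Finset.mem_range.mp hi)]

lemma uval_split {k j : ℕ} (hkj : k ≤ j) (s : ℕ → ℕ) :
    Uval s j = Uval s k +
      ((Finset.Ico k j).filter (fun i => s i ≠ 0 ∧ Even (s i))).card := by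
  unfold Uval
  rw [Finset.range_eq_Ico, ← Finset.Ico_union_Ico_eq_Ico (Nat.zero_le k) hkj,
    Finset.filter_union, Finset.card_union_of_disjoint, ← Finset.range_eq_Ico]
  exact Finset.disjoint_filter_filter (Finset.Ico_disjoint_Ico_consecutive 0 k j)

lemma filter_Ico_card_one {k j m : ℕ} {s : ℕ → ℕ} (hm : k ≤ m) (hmj : m < j)
    (hsm : s m ≠ 0 ∧ Even (s m))
    (h : ∀ i, k ≤ i → i < j → i ≠ m → ¬(s i ≠ 0 ∧ Even (s i))) :
    ((Finset.Ico k j).filter (fun i => s i ≠ 0 ∧ Even (s i))).card = 1 := by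
  have he : (Finset.Ico k j).filter (fun i => s i ≠ 0 ∧ Even (s i)) = {m} := by
    ext i
    simp only [Finset.mem_filter, Finset.mem_Ico, Finset.mem_singleton]
    constructor
    · rintro ⟨⟨h1, h2⟩, h3⟩
      by_contra hne
      exact h i h1 h2 hne h3
    · rintro rfl
      exact ⟨⟨hm, hmj⟩, hsm⟩
  rw [he, Finset.card_singleton]

lemma filter_Ico_card_zero {k j : ℕ} {s : ℕ → ℕ}
    (h : ∀ i, k ≤ i → i < j → ¬(s i ≠ 0 ∧ Even (s i))) :
    ((Finset.Ico k j).filter (fun i => s i ≠ 0 ∧ Even (s i))).card = 0 := by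
  rw [Finset.card_eq_zero, Finset.filter_eq_empty_iff]
  intro i hi
  exact h i (Finset.mem_Ico.mp hi).1 (Finset.mem_Ico.mp hi).2

/-- form of the `⋖`-last sequence of `R_n(b)` (`b` even) with a fixed prefix. -/
theorem stmt6 (n b k : ℕ) (hbeven : Even b) (hb2 : 2 ≤ b) (hk1 : 1 ≤ k) (hk : k + 2 ≤ n)
    (p t : ℕ → ℕ) (hp : InRnb n b p) (ht : InRnb n b t)
    (htp : ∀ i < k, t i = p i)
    (hlast : ∀ u : ℕ → ℕ, InRnb n b u → (∀ i < k, u i = p i) →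
      (∀ i < n, u i = t i) ∨ coRgcLt n u t) :
    (Even (Uval p k) → Even (min b ((Finset.range k).sup p + 1)) →
      t k = min b ((Finset.range k).sup p + 1) ∧ ∀ i, k < i → i < n → t i = 0) ∧
    (Even (Uval p k) → Odd (min b ((Finset.range k).sup p + 1)) →
      t k = min b ((Finset.range k).sup p + 1) ∧
      t (k + 1) = min b ((Finset.range k).sup p + 1) + 1 ∧
      ∀ i, k + 1 < i → i < n → t i = 0) ∧
    (Odd (Uval p k) → ∀ i, k ≤ i → i < n → t i = 0) := by
  have hkn : k < n := by omega
  set S := (Finset.range k).sup p with hSdef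
  set M := min b (S + 1) with hMdef
  have hSb : S ≤ b := Finset.sup_le fun i hi => hp.2 i (by
    have := Finset.mem_range.mp hi; omega)
  have hMb : M ≤ b := min_le_left _ _
  have hMS : M ≤ S + 1 := min_le_right _ _
  have hMpos : 1 ≤ M := le_min (by omega) (by omega)
  have hsupt : (Finset.range k).sup t = S := sup_congr_range htp
  have htkM : t k ≤ M := by
    have h1 := ht.1.2 (k - 1) (by omega)
    rw [Nat.sub_add_cancel hk1, hsupt] at h1
    have h3 := ht.2 k (by omega)
    omega
  refine ⟨?_, ?_, ?_⟩
  · -- case A : U even, M even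
    intro hU hMev
    set w : ℕ → ℕ := fun i => if i < k then p i else if i = k then M else 0 with hwdef
    have hwpre : ∀ i < k, w i = p i := by
      intro i hi; simp only [hwdef]; rw [if_pos hi]
    have hwk : w k = M := by
      simp only [hwdef]; rw [if_neg (lt_irrefl k), if_pos trivial]
    have hwz : ∀ i, k < i → w i = 0 := by
      intro i hi; simp only [hwdef]; rw [if_neg (by omega), if_neg (by omega)]
    have hsupw : ∀ m, m ≤ k → (Finset.range m).sup w = (Finset.range m).sup p := by
      intro m hm
      exact sup_congr_range fun i hi => hwpre i (by omega)
    have hwin : InRnb n b w := by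
      refine ⟨⟨?_, ?_⟩, ?_⟩
      · rw [hwpre 0 (by omega)]; exact hp.1.1
      · intro i hi
        rcases lt_trichotomy (i + 1) k with h1 | h1 | h1
        · rw [hwpre (i + 1) h1, hsupw (i + 1) (by omega)]
          exact hp.1.2 i (by omega)
        · rw [h1, hwk, hsupw k le_rfl]
          omega
        · rw [hwz (i + 1) h1]; omega
      · intro i hi
        rcases lt_trichotomy i k with h1 | h1 | h1
        · rw [hwpre i h1]; exact hp.2 i hi
        · rw [h1, hwk]; exact hMb
        · rw [hwz i h1]; omega
    rcases hlast w hwin hwpre with heq | hlt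
    · constructor
      · rw [← heq k hkn, hwk]
      · intro i h1 h2
        rw [← heq i h2, hwz i h1]
    · exfalso
      obtain ⟨j, hjn, hagree, hor⟩ := hlt
      rcases lt_trichotomy j k with h1 | h1 | h1
      · have h2 : w j = t j := by rw [hwpre j h1, htp j h1]
        rcases hor with ⟨_, h3⟩ | ⟨_, h3⟩ <;> omega
      · subst h1
        rcases hor with ⟨h2, h3⟩ | ⟨h2, h3⟩
        · rw [hwk] at h3; omega
        · rw [uval_congr hwpre] at h2
          exact (Nat.not_odd_iff_even.mpr hU) h2
      · have hcard := filter_Ico_card_one (s := w) (m := k) le_rfl h1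
          ⟨by rw [hwk]; omega, by rw [hwk]; exact hMev⟩
          (fun i hi1 hi2 hi3 => by rw [hwz i (by omega)]; simp)
        have hsplit := uval_split (le_of_lt h1) w
        rw [hcard, uval_congr hwpre] at hsplit
        rcases hor with ⟨h2, h3⟩ | ⟨h2, h3⟩
        · rw [hsplit, Nat.even_add_one] at h2
          exact h2 hU
        · rw [hwz j h1] at h3; omega
  · -- case B : U even, M odd
    intro hU hModd
    have hMltb : M < b := by
      rcases eq_or_lt_of_le hMb with h | h
      · exfalso
        have hMev : Even M := by rw [h]; exact hbeven
        exact (Nat.not_odd_iff_even.mpr hMev) hModd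
      · exact h
    have hMeqS : M = S + 1 := by omega
    set w : ℕ → ℕ :=
      fun i => if i < k then p i else if i = k then M else if i = k + 1 then M + 1 else 0
      with hwdef
    have hwpre : ∀ i < k, w i = p i := by
      intro i hi; simp only [hwdef]; rw [if_pos hi]
    have hwk : w k = M := by
      simp only [hwdef]; rw [if_neg (lt_irrefl k), if_pos trivial]
    have hwk1 : w (k + 1) = M + 1 := by
      simp only [hwdef]; rw [if_neg (by omega), if_neg (by omega), if_pos trivial]
    have hwz : ∀ i, k + 1 < i → w i = 0 := by
      intro i hi; simp only [hwdef]
      rw [if_neg (by omega), if_neg (by omega), if_neg (by omega)]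
    have hsupw : ∀ m, m ≤ k → (Finset.range m).sup w = (Finset.range m).sup p := by
      intro m hm
      exact sup_congr_range fun i hi => hwpre i (by omega)
    have hwin : InRnb n b w := by
      refine ⟨⟨?_, ?_⟩, ?_⟩
      · rw [hwpre 0 (by omega)]; exact hp.1.1
      · intro i hi
        rcases lt_trichotomy (i + 1) k with h1 | h1 | h1
        · rw [hwpre (i + 1) h1, hsupw (i + 1) (by omega)]
          exact hp.1.2 i (by omega)
        · rw [h1, hwk, hsupw k le_rfl]
          omega
        · rcases lt_trichotomy (i + 1) (k + 1) with h2 | h2 | h2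
          · omega
          · rw [h2, hwk1, Finset.range_add_one, Finset.sup_insert, hwk, hsupw k le_rfl]
            have h4 : M ⊔ (Finset.range k).sup p = M := sup_eq_left.mpr (by omega)
            rw [h4]
          · rw [hwz (i + 1) h2]; omega
      · intro i hi
        rcases lt_trichotomy i k with h1 | h1 | h1
        · rw [hwpre i h1]; exact hp.2 i hi
        · rw [h1, hwk]; exact hMb
        · rcases lt_trichotomy i (k + 1) with h2 | h2 | h2
          · omega
          · rw [h2, hwk1]; omega
          · rw [hwz i h2]; omega
    rcases hlast w hwin hwpre with heq | hlt
    · refine ⟨?_, ?_, ?_⟩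
      · rw [← heq k hkn, hwk]
      · rw [← heq (k + 1) (by omega), hwk1]
      · intro i h1 h2
        rw [← heq i h2, hwz i h1]
    · exfalso
      obtain ⟨j, hjn, hagree, hor⟩ := hlt
      rcases lt_trichotomy j k with h1 | h1 | h1
      · have h2 : w j = t j := by rw [hwpre j h1, htp j h1]
        rcases hor with ⟨_, h3⟩ | ⟨_, h3⟩ <;> omega
      · subst h1
        rcases hor with ⟨h2, h3⟩ | ⟨h2, h3⟩
        · rw [hwk] at h3; omega
        · rw [uval_congr hwpre] at h2
          exact (Nat.not_odd_iff_even.mpr hU) h2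
      · rcases lt_trichotomy j (k + 1) with h2 | h2 | h2
        · omega
        · subst h2
          have hcard := filter_Ico_card_zero (s := w) (k := k) (j := k + 1)
            (fun i hi1 hi2 => by
              have h3 : i = k := by omega
              subst h3
              rw [hwk]
              rintro ⟨-, hev⟩
              exact (Nat.not_odd_iff_even.mpr hev) hModd)
          have hsplit := uval_split (Nat.le_succ k) w
          rw [hcard, uval_congr hwpre, Nat.add_zero] at hsplit
          rcases hor with ⟨h3, h4⟩ | ⟨h3, h4⟩
          · rw [hwk1] at h4
            have h5 := ht.1.2 k (by omega)
            rw [Finset.range_add_one, Finset.sup_insert] at h5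
            have h6 : t k = M := by rw [← hagree k (by omega), hwk]
            rw [h6, hsupt] at h5
            have h7 : M ⊔ S = M := sup_eq_left.mpr (by omega)
            rw [h7] at h5
            omega
          · rw [hsplit] at h3
            exact (Nat.not_odd_iff_even.mpr hU) h3
        · have hcard := filter_Ico_card_one (s := w) (m := k + 1) (Nat.le_succ k) h2
            ⟨by rw [hwk1]; omega,
             by rw [hwk1]; exact Nat.even_add_one.mpr (Nat.not_even_iff_odd.mpr hModd)⟩
            (fun i hi1 hi2 hi3 => by
              rcases eq_or_lt_of_le hi1 with h4 | h4
              · rw [← h4, hwk]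
                rintro ⟨-, hev⟩
                exact (Nat.not_odd_iff_even.mpr hev) hModd
              · rw [hwz i (by omega)]; simp)
          have hsplit := uval_split (le_of_lt (by omega : k < j)) w
          rw [hcard, uval_congr hwpre] at hsplit
          rcases hor with ⟨h3, h4⟩ | ⟨h3, h4⟩
          · rw [hsplit, Nat.even_add_one] at h3
            exact h3 hU
          · rw [hwz j h2] at h4; omega
  · -- case C : U odd
    intro hU i hik hin
    set w : ℕ → ℕ := fun i => if i < k then p i else 0 with hwdef
    have hwpre : ∀ i < k, w i = p i := by
      intro i hi; simp only [hwdef]; rw [if_pos hi]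
    have hwz : ∀ i, k ≤ i → w i = 0 := by
      intro i hi; simp only [hwdef]; rw [if_neg (by omega)]
    have hsupw : ∀ m, m ≤ k → (Finset.range m).sup w = (Finset.range m).sup p := by
      intro m hm
      exact sup_congr_range fun i hi => hwpre i (by omega)
    have hwin : InRnb n b w := by
      refine ⟨⟨?_, ?_⟩, ?_⟩
      · rw [hwpre 0 (by omega)]; exact hp.1.1
      · intro i hi
        rcases lt_or_ge (i + 1) k with h1 | h1
        · rw [hwpre (i + 1) h1, hsupw (i + 1) (by omega)]
          exact hp.1.2 i (by omega)
        · rw [hwz (i + 1) h1]; omega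
      · intro i hi
        rcases lt_or_ge i k with h1 | h1
        · rw [hwpre i h1]; exact hp.2 i hi
        · rw [hwz i h1]; omega
    rcases hlast w hwin hwpre with heq | hlt
    · rw [← heq i hin, hwz i hik]
    · exfalso
      obtain ⟨j, hjn, hagree, hor⟩ := hlt
      rcases lt_or_ge j k with h1 | h1
      · have h2 : w j = t j := by rw [hwpre j h1, htp j h1]
        rcases hor with ⟨_, h3⟩ | ⟨_, h3⟩ <;> omega
      · have hcard := filter_Ico_card_zero (s := w) (k := k) (j := j)
          (fun i hi1 hi2 => by rw [hwz i hi1]; simp)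
        have hsplit := uval_split h1 w
        rw [hcard, uval_congr hwpre, Nat.add_zero] at hsplit
        rcases hor with ⟨h2, h3⟩ | ⟨h2, h3⟩
        · rw [hsplit] at h2
          exact (Nat.not_odd_iff_even.mpr h2) hU
        · rw [hwz j h1] at h3; omega
end

section
/- For any n ≥ 1 and even b ≥ 2, if s and t are consecutive sequences in the list of R_n(b) ordered by the co-Reflected Gray Code Order, then s and t differ in at most 3 positions, and these positions are adjacent. -/
/- ## Auxiliary lemmas -/

lemma stmt8_uval_succ (s : ℕ → ℕ) (k : ℕ) :
    Uval s (k+1) = Uval s k + (if s k ≠ 0 ∧ Even (s k) then 1 else 0) := by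
  unfold Uval
  rw [Finset.range_add_one, Finset.filter_insert]
  split
  · rw [Finset.card_insert_of_notMem (by simp)]
  · simp

lemma stmt8_uval_congr (s t : ℕ → ℕ) (k : ℕ) (h : ∀ i < k, s i = t i) :
    Uval s k = Uval t k := by
  unfold Uval
  congr 1
  apply Finset.filter_congr
  intro i hi
  rw [h i (Finset.mem_range.mp hi)]

/-- the modified sequence: agrees with `v` below `m`, takes value `c` at `m`, `0` above. -/
def stmt8_mkU (v : ℕ → ℕ) (m c : ℕ) : ℕ → ℕ :=
  fun i => if i < m then v i else if i = m then c else 0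

lemma stmt8_mkU_lt (v : ℕ → ℕ) (m c i : ℕ) (h : i < m) : stmt8_mkU v m c i = v i := if_pos h

lemma stmt8_mkU_self (v : ℕ → ℕ) (m c : ℕ) : stmt8_mkU v m c m = c := by simp [stmt8_mkU]

lemma stmt8_mkU_gt (v : ℕ → ℕ) (m c i : ℕ) (h : m < i) : stmt8_mkU v m c i = 0 := by
  unfold stmt8_mkU
  rw [if_neg (by omega), if_neg (by omega)]

lemma stmt8_mkU_sup (v : ℕ → ℕ) (m c j : ℕ) (h : j ≤ m) :
    (Finset.range j).sup (stmt8_mkU v m c) = (Finset.range j).sup v :=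
  Finset.sup_congr rfl fun i hi => stmt8_mkU_lt v m c i (lt_of_lt_of_le (Finset.mem_range.mp hi) h)

lemma stmt8_rgf_bound (n : ℕ) (v : ℕ → ℕ) (h : IsRGF n v) (m : ℕ) (h1 : 1 ≤ m) (h2 : m < n) :
    v m ≤ (Finset.range m).sup v + 1 := by
  obtain ⟨m', rfl⟩ : ∃ m', m = m' + 1 := ⟨m - 1, by omega⟩
  exact h.2 m' h2

lemma stmt8_mkU_mem (n b : ℕ) (v : ℕ → ℕ) (hv : InRnb n b v) (m c : ℕ)
    (hm1 : 1 ≤ m) (hcb : c ≤ b) (hcs : c ≤ (Finset.range m).sup v + 1) :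
    InRnb n b (stmt8_mkU v m c) := by
  obtain ⟨⟨h0, hg⟩, hb⟩ := hv
  refine ⟨⟨?_, ?_⟩, ?_⟩
  · rw [stmt8_mkU_lt v m c 0 hm1]; exact h0
  · intro i hi
    rcases lt_trichotomy (i+1) m with h | h | h
    · rw [stmt8_mkU_lt _ _ _ _ h, stmt8_mkU_sup _ _ _ _ (by omega)]
      exact hg i hi
    · rw [h, stmt8_mkU_self, stmt8_mkU_sup _ _ _ _ (by omega)]
      exact hcs
    · rw [stmt8_mkU_gt _ _ _ _ h]; exact Nat.zero_le _
  · intro i hi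
    rcases lt_trichotomy i m with h | h | h
    · rw [stmt8_mkU_lt _ _ _ _ h]; exact hb i hi
    · rw [h, stmt8_mkU_self]; exact hcb
    · rw [stmt8_mkU_gt _ _ _ _ h]; exact Nat.zero_le _

lemma stmt8_uval_stable (v : ℕ → ℕ) (m0 j : ℕ) (h : m0 ≤ j)
    (hz : ∀ i, m0 ≤ i → i < j → v i = 0) : Uval v j = Uval v m0 := by
  induction j, h using Nat.le_induction with
  | base => rfl
  | succ j hj ih =>
    rw [stmt8_uval_succ, if_neg (by simp [hz j hj (by omega)]),
      ih (fun i h1 h2 => hz i h1 (by omega))]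
    omega

lemma stmt8_tail_zero (n : ℕ) (v : ℕ → ℕ) (pr : ℕ → Prop) (m0 : ℕ)
    (hpar : pr (Uval v m0))
    (H : ∀ m, m0 ≤ m → m < n → pr (Uval v m) → v m = 0) :
    ∀ j, m0 ≤ j → j < n → v j = 0 := by
  intro j
  induction j using Nat.strong_induction_on with
  | _ j IH =>
    intro hj hjn
    have hz : ∀ i, m0 ≤ i → i < j → v i = 0 := fun i h1 h2 => IH i h2 h1 (by omega)
    exact H j hj hjn ((stmt8_uval_stable v m0 j hj hz) ▸ hpar)

/-- for even `b`, consecutive elements of `R_n(b)` in `⋖` order differ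
in at most 3 adjacent positions. -/
theorem stmt8 (n b : ℕ) (hn : 1 ≤ n) (hbeven : Even b) (hb2 : 2 ≤ b)
    (s t : ℕ → ℕ) (hs : InRnb n b s) (ht : InRnb n b t)
    (hst : coRgcLt n s t)
    (hcons : ¬ ∃ u, InRnb n b u ∧ coRgcLt n s u ∧ coRgcLt n u t) :
    ∃ k, ∀ i < n, s i ≠ t i → k ≤ i ∧ i < k + 3 := by
  obtain ⟨k, hkn, hpre, hcase⟩ := hst
  push_neg at hcons
  refine ⟨k, ?_⟩
  -- extremality of `t` beyond `k`
  have hA : ∀ m, k < m → m < n →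
      (Even (Uval t m) → t m = 0) ∧
      (Odd (Uval t m) → t m = b ∨ t m = (Finset.range m).sup t + 1) := by
    intro m hkm hmn
    have hbd : t m ≤ (Finset.range m).sup t + 1 := stmt8_rgf_bound n t ht.1 m (by omega) hmn
    have hbb : t m ≤ b := ht.2 m hmn
    constructor
    · intro hev
      by_contra h0
      set u := stmt8_mkU t m (t m - 1) with hu
      have hmem : InRnb n b u := stmt8_mkU_mem n b t ht m (t m - 1) (by omega) (by omega) (by omega)
      have hsu : coRgcLt n s u := by
        refine ⟨k, hkn, fun i hi => (hpre i hi).trans (stmt8_mkU_lt t m _ i (by omega)).symm, ?_⟩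
        have huk : u k = t k := stmt8_mkU_lt t m _ k hkm
        rw [huk]
        exact hcase
      have hut : coRgcLt n u t := by
        refine ⟨m, hmn, fun i hi => stmt8_mkU_lt t m _ i hi, Or.inl ⟨?_, ?_⟩⟩
        · rw [stmt8_uval_congr u t m (fun i hi => stmt8_mkU_lt t m _ i hi)]
          exact hev
        · rw [hu, stmt8_mkU_self]; omega
      exact hcons u hmem hsu hut
    · intro hod
      by_contra h0
      push_neg at h0
      have h1 : t m + 1 ≤ b := by omega
      have h2 : t m + 1 ≤ (Finset.range m).sup t + 1 := by omega
      set u := stmt8_mkU t m (t m + 1) with hu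
      have hmem : InRnb n b u := stmt8_mkU_mem n b t ht m (t m + 1) (by omega) h1 h2
      have hsu : coRgcLt n s u := by
        refine ⟨k, hkn, fun i hi => (hpre i hi).trans (stmt8_mkU_lt t m _ i (by omega)).symm, ?_⟩
        have huk : u k = t k := stmt8_mkU_lt t m _ k hkm
        rw [huk]
        exact hcase
      have hut : coRgcLt n u t := by
        refine ⟨m, hmn, fun i hi => stmt8_mkU_lt t m _ i hi, Or.inr ⟨?_, ?_⟩⟩
        · rw [stmt8_uval_congr u t m (fun i hi => stmt8_mkU_lt t m _ i hi)]
          exact hod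
        · rw [hu, stmt8_mkU_self]; omega
      exact hcons u hmem hsu hut
  -- extremality of `s` beyond `k`
  have hB : ∀ m, k < m → m < n →
      (Odd (Uval s m) → s m = 0) ∧
      (Even (Uval s m) → s m = b ∨ s m = (Finset.range m).sup s + 1) := by
    intro m hkm hmn
    have hbd : s m ≤ (Finset.range m).sup s + 1 := stmt8_rgf_bound n s hs.1 m (by omega) hmn
    have hbb : s m ≤ b := hs.2 m hmn
    have key : ∀ c, c ≤ b → c ≤ (Finset.range m).sup s + 1 →
        ((Even (Uval s m) ∧ s m < c) ∨ (Odd (Uval s m) ∧ c < s m)) → False := by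
      intro c hcb hcs hdisj
      set u := stmt8_mkU s m c with hu
      have hmem : InRnb n b u := stmt8_mkU_mem n b s hs m c (by omega) hcb hcs
      have hsu : coRgcLt n s u := by
        refine ⟨m, hmn, fun i hi => (stmt8_mkU_lt s m _ i hi).symm, ?_⟩
        rw [hu, stmt8_mkU_self]
        exact hdisj
      have hut : coRgcLt n u t := by
        refine ⟨k, hkn, fun i hi => (stmt8_mkU_lt s m _ i (by omega)).trans (hpre i hi), ?_⟩
        have huk : u k = s k := stmt8_mkU_lt s m _ k hkm
        have huv : Uval u k = Uval s k :=
          stmt8_uval_congr u s k (fun i hi => stmt8_mkU_lt s m _ i (by omega))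
        rw [huk, huv]
        exact hcase
      exact hcons u hmem hsu hut
    constructor
    · intro hod
      by_contra h0
      exact key (s m - 1) (by omega) (by omega) (Or.inr ⟨hod, by omega⟩)
    · intro hev
      by_contra h0
      push_neg at h0
      exact key (s m + 1) (by omega) (by omega) (Or.inl ⟨hev, by omega⟩)
  -- the tail of `t` vanishes from `k+3` on
  have hTz : ∀ j, k + 3 ≤ j → j < n → t j = 0 := by
    intro j hj hjn
    have h1 : k + 1 < n := by omega
    have h2 : k + 2 < n := by omega
    have HT : ∀ m, k + 1 ≤ m → m < n → Even (Uval t m) → t m = 0 :=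
      fun m hm hmn h => (hA m (by omega) hmn).1 h
    rcases Nat.even_or_odd (Uval t (k+1)) with hev | hod
    · exact stmt8_tail_zero n t Even (k+1) hev HT j (by omega) hjn
    · have ht1 : t (k+1) = b ∨ t (k+1) = (Finset.range (k+1)).sup t + 1 :=
        (hA (k+1) (by omega) h1).2 hod
      have ht1ne : t (k+1) ≠ 0 := by rcases ht1 with h | h <;> omega
      rcases Nat.even_or_odd (t (k+1)) with he | hoE
      · have hev2 : Even (Uval t (k+2)) := by
          rw [stmt8_uval_succ, if_pos ⟨ht1ne, he⟩]
          exact hod.add_one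
        exact stmt8_tail_zero n t Even (k+2) hev2 (fun m hm hmn h => HT m (by omega) hmn h) j (by omega) hjn
      · have ht1v : t (k+1) = (Finset.range (k+1)).sup t + 1 := by
          rcases ht1 with h | h
          · exact absurd (h ▸ hbeven) (Nat.not_even_iff_odd.mpr hoE)
          · exact h
        have hod2 : Odd (Uval t (k+2)) := by
          rw [stmt8_uval_succ, if_neg (by simp [Nat.not_even_iff_odd.mpr hoE])]
          simpa using hod
        have ht2 : t (k+2) = b ∨ t (k+2) = (Finset.range (k+2)).sup t + 1 :=
          (hA (k+2) (by omega) h2).2 hod2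
        have hsup2 : (Finset.range (k+2)).sup t = t (k+1) := by
          rw [Finset.range_add_one, Finset.sup_insert]
          rw [ht1v]
          exact sup_eq_left.mpr (by omega)
        have ht2e : Even (t (k+2)) ∧ t (k+2) ≠ 0 := by
          rcases ht2 with h | h
          · exact ⟨h ▸ hbeven, by omega⟩
          · refine ⟨?_, by omega⟩
            rw [h, hsup2]
            exact hoE.add_one
        have hev3 : Even (Uval t (k+3)) := by
          rw [show k + 3 = (k+2) + 1 by omega, stmt8_uval_succ, if_pos ⟨ht2e.2, ht2e.1⟩]
          exact hod2.add_one
        exact stmt8_tail_zero n t Even (k+3) hev3 (fun m hm hmn h => HT m (by omega) hmn h) j hj hjn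
  -- the tail of `s` vanishes from `k+3` on
  have hSz : ∀ j, k + 3 ≤ j → j < n → s j = 0 := by
    intro j hj hjn
    have h1 : k + 1 < n := by omega
    have h2 : k + 2 < n := by omega
    have HS : ∀ m, k + 1 ≤ m → m < n → Odd (Uval s m) → s m = 0 :=
      fun m hm hmn h => (hB m (by omega) hmn).1 h
    rcases Nat.even_or_odd (Uval s (k+1)) with hev | hod
    · have hs1 : s (k+1) = b ∨ s (k+1) = (Finset.range (k+1)).sup s + 1 :=
        (hB (k+1) (by omega) h1).2 hev
      have hs1ne : s (k+1) ≠ 0 := by rcases hs1 with h | h <;> omega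
      rcases Nat.even_or_odd (s (k+1)) with he | hoE
      · have hod2 : Odd (Uval s (k+2)) := by
          rw [stmt8_uval_succ, if_pos ⟨hs1ne, he⟩]
          exact hev.add_one
        exact stmt8_tail_zero n s Odd (k+2) hod2 (fun m hm hmn h => HS m (by omega) hmn h) j (by omega) hjn
      · have hs1v : s (k+1) = (Finset.range (k+1)).sup s + 1 := by
          rcases hs1 with h | h
          · exact absurd (h ▸ hbeven) (Nat.not_even_iff_odd.mpr hoE)
          · exact h
        have hev2 : Even (Uval s (k+2)) := by
          rw [stmt8_uval_succ, if_neg (by simp [Nat.not_even_iff_odd.mpr hoE])]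
          simpa using hev
        have hs2 : s (k+2) = b ∨ s (k+2) = (Finset.range (k+2)).sup s + 1 :=
          (hB (k+2) (by omega) h2).2 hev2
        have hsup2 : (Finset.range (k+2)).sup s = s (k+1) := by
          rw [Finset.range_add_one, Finset.sup_insert]
          rw [hs1v]
          exact sup_eq_left.mpr (by omega)
        have hs2e : Even (s (k+2)) ∧ s (k+2) ≠ 0 := by
          rcases hs2 with h | h
          · exact ⟨h ▸ hbeven, by omega⟩
          · refine ⟨?_, by omega⟩
            rw [h, hsup2]
            exact hoE.add_one
        have hod3 : Odd (Uval s (k+3)) := by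
          rw [show k + 3 = (k+2) + 1 by omega, stmt8_uval_succ, if_pos ⟨hs2e.2, hs2e.1⟩]
          exact hev2.add_one
        exact stmt8_tail_zero n s Odd (k+3) hod3 (fun m hm hmn h => HS m (by omega) hmn h) j hj hjn
    · exact stmt8_tail_zero n s Odd (k+1) hod HS j (by omega) hjn
  -- conclusion
  intro i hin hne
  constructor
  · by_contra h
    exact hne (hpre i (by omega))
  · by_contra h
    push_neg at h
    exact hne ((hSz i (by omega) hin).trans (hTz i (by omega) hin).symm)
end

section
/- For any n ≥ 1, consecutive sequences in the list of all restricted growth functions R_n ordered by the Reflected Gray Code Order ≺ differ in at most 3 adjacent positions. -/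
/-!
If `s ≺ t` are consecutive and first differ at position `k`, then beyond `k` the sequence `s` is
the `≺`-largest RGF continuation of its prefix and `t` the `≺`-smallest one: otherwise replacing
one later entry of `s` (or `t`) by its extremal value and zeroing everything after it gives an RGF
strictly between `s` and `t`. The extremal continuation takes the value `max + 1` while the prefix
sum has the right parity and `0` once it has the wrong one, which then persists. Two ascents in a
row, `M + 1` then `M + 2`, flip the parity, so both sequences vanish from position `k + 3` on.
-/

open Finset

def rgcLtAt (k : ℕ) (s t : ℕ → ℕ) : Prop :=
  (∀ i < k, s i = t i) ∧
    ((Even (∑ i ∈ range k, s i) ∧ s k < t k) ∨ (Odd (∑ i ∈ range k, s i) ∧ t k < s k))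

theorem rgcLt_iff_exists_rgcLtAt {n : ℕ} {s t : ℕ → ℕ} :
    rgcLt n s t ↔ ∃ k < n, rgcLtAt k s t :=
  Iff.rfl

theorem rgcLtAt.congr_left {k : ℕ} {s t u : ℕ → ℕ} (h : rgcLtAt k s t)
    (hu : ∀ i ≤ k, u i = s i) : rgcLtAt k u t := by
  have hsum : ∑ i ∈ range k, u i = ∑ i ∈ range k, s i :=
    sum_congr rfl fun i hi => hu i (mem_range.mp hi).le
  refine ⟨fun i hi => (hu i hi.le).trans (h.1 i hi), ?_⟩
  rw [hsum, hu k le_rfl]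
  exact h.2

theorem rgcLtAt.congr_right {k : ℕ} {s t u : ℕ → ℕ} (h : rgcLtAt k s t)
    (hu : ∀ i ≤ k, u i = t i) : rgcLtAt k s u := by
  refine ⟨fun i hi => (h.1 i hi).trans (hu i hi.le).symm, ?_⟩
  rw [hu k le_rfl]
  exact h.2

theorem IsRGF.le_sup_add_one {n j : ℕ} {s : ℕ → ℕ} (hs : IsRGF n s) (hj : 0 < j)
    (hjn : j < n) : s j ≤ (range j).sup s + 1 := by
  obtain ⟨i, rfl⟩ : ∃ i, j = i + 1 := ⟨j - 1, by omega⟩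
  exact hs.2 i (by omega)

def prefixThen (s : ℕ → ℕ) (j c : ℕ) : ℕ → ℕ :=
  fun i => if i < j then s i else if i = j then c else 0

section prefixThen

variable {s : ℕ → ℕ} {j c i : ℕ}

theorem prefixThen_of_lt (h : i < j) : prefixThen s j c i = s i := if_pos h

@[simp] theorem prefixThen_self : prefixThen s j c j = c := by simp [prefixThen]

theorem sum_range_prefixThen : ∑ i ∈ range j, prefixThen s j c i = ∑ i ∈ range j, s i :=
  sum_congr rfl fun _ hi => prefixThen_of_lt (mem_range.mp hi)

theorem sup_range_prefixThen {m : ℕ} (hm : m ≤ j) :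
    (range m).sup (prefixThen s j c) = (range m).sup s :=
  sup_congr rfl fun _ hi => prefixThen_of_lt ((mem_range.mp hi).trans_le hm)

theorem isRGF_prefixThen {n : ℕ} (hs : IsRGF n s) (hj : 0 < j)
    (hc : c ≤ (range j).sup s + 1) : IsRGF n (prefixThen s j c) := by
  refine ⟨(prefixThen_of_lt hj).trans hs.1, fun i hi => ?_⟩
  rcases lt_trichotomy (i + 1) j with hlt | rfl | hgt
  · rw [prefixThen_of_lt hlt, sup_range_prefixThen hlt.le]
    exact hs.2 i hi
  · rwa [prefixThen_self, sup_range_prefixThen le_rfl]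
  · simp [prefixThen, hgt.not_gt, hgt.ne']

theorem rgcLtAt_prefixThen_right :
    rgcLtAt j s (prefixThen s j c) ↔
      (Even (∑ i ∈ range j, s i) ∧ s j < c) ∨ (Odd (∑ i ∈ range j, s i) ∧ c < s j) := by
  simp only [rgcLtAt, prefixThen_self, and_iff_right_iff_imp]
  exact fun _ i hi => (prefixThen_of_lt hi).symm

theorem rgcLtAt_prefixThen_left :
    rgcLtAt j (prefixThen s j c) s ↔
      (Even (∑ i ∈ range j, s i) ∧ c < s j) ∨ (Odd (∑ i ∈ range j, s i) ∧ s j < c) := by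
  simp only [rgcLtAt, prefixThen_self, sum_range_prefixThen, and_iff_right_iff_imp]
  exact fun _ i hi => prefixThen_of_lt hi

end prefixThen

/-- With `r = 0` this is the entry at `j` of the `≺`-largest RGF continuation of
`g 0, …, g (j - 1)`, with `r = 1` that of the `≺`-smallest one. -/
def greedyValue (r : ℕ) (g : ℕ → ℕ) (j : ℕ) : ℕ :=
  if (∑ i ∈ range j, g i) % 2 = r then (range j).sup g + 1 else 0

section greedyValue

variable {r j x : ℕ} {g : ℕ → ℕ}

theorem greedyValue_le_sup_add_one : greedyValue r g j ≤ (range j).sup g + 1 := by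
  unfold greedyValue; split_ifs <;> omega

theorem greedyValue_of_mod_two_ne (h : (∑ i ∈ range j, g i) % 2 ≠ r) : greedyValue r g j = 0 :=
  if_neg h

theorem lt_greedyValue_or_greedyValue_lt (hx : x ≤ (range j).sup g + 1)
    (hne : x ≠ greedyValue r g j) :
    ((∑ i ∈ range j, g i) % 2 = r ∧ x < greedyValue r g j) ∨
      ((∑ i ∈ range j, g i) % 2 ≠ r ∧ greedyValue r g j < x) := by
  unfold greedyValue at hne ⊢
  split_ifs at hne ⊢ with h
  · exact Or.inl ⟨h, by omega⟩
  · exact Or.inr ⟨h, by omega⟩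

theorem sum_range_succ_mod_two_ne (hg : g j = greedyValue r g j)
    (h : (∑ i ∈ range j, g i) % 2 ≠ r) : (∑ i ∈ range (j + 1), g i) % 2 ≠ r := by
  rwa [sum_range_succ, hg, greedyValue_of_mod_two_ne h, add_zero]

theorem sum_range_add_two_mod_two_ne (hg : g j = greedyValue r g j)
    (hg' : g (j + 1) = greedyValue r g (j + 1)) : (∑ i ∈ range (j + 2), g i) % 2 ≠ r := by
  by_cases h : (∑ i ∈ range j, g i) % 2 = r
  · by_cases h' : (∑ i ∈ range (j + 1), g i) % 2 = r
    · have hj : g j = (range j).sup g + 1 := by rw [hg, greedyValue, if_pos h]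
      have hsup : (range (j + 1)).sup g = g j := by
        rw [range_add_one, sup_insert]
        exact sup_eq_left.mpr (by omega)
      have hj' : g (j + 1) = g j + 1 := by rw [hg', greedyValue, if_pos h', hsup]
      rw [sum_range_succ] at h'
      rw [sum_range_succ, sum_range_succ]
      omega
    · exact sum_range_succ_mod_two_ne hg' h'
  · exact sum_range_succ_mod_two_ne hg' (sum_range_succ_mod_two_ne hg h)

theorem eq_zero_of_forall_eq_greedyValue {n k : ℕ}
    (hg : ∀ j, k < j → j < n → g j = greedyValue r g j) ⦃j : ℕ⦄ (hkj : k + 3 ≤ j) (hjn : j < n) :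
    g j = 0 := by
  have hpar : ∀ m, k + 3 ≤ m → m ≤ j → (∑ i ∈ range m, g i) % 2 ≠ r := by
    intro m hkm hmj
    induction m, hkm using Nat.le_induction with
    | base =>
      exact sum_range_add_two_mod_two_ne (hg _ (by omega) (by omega)) (hg _ (by omega) (by omega))
    | succ m hkm ih =>
      exact sum_range_succ_mod_two_ne (hg m (by omega) (by omega)) (ih (by omega))
  rw [hg j (by omega) hjn, greedyValue_of_mod_two_ne (hpar j hkj le_rfl)]

end greedyValue

section Consecutive

variable {n k j : ℕ} {s t : ℕ → ℕ}

theorem eq_greedyValue_zero_of_consecutive (hs : IsRGF n s) (hst : rgcLtAt k s t)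
    (hcons : ¬ ∃ u, IsRGF n u ∧ rgcLt n s u ∧ rgcLt n u t) (hkj : k < j) (hjn : j < n) :
    s j = greedyValue 0 s j := by
  by_contra hne
  have hj : 0 < j := by omega
  refine hcons ⟨prefixThen s j (greedyValue 0 s j),
    isRGF_prefixThen hs hj greedyValue_le_sup_add_one,
    ⟨j, hjn, rgcLtAt_prefixThen_right.mpr ?_⟩,
    ⟨k, by omega, hst.congr_left fun i hi => prefixThen_of_lt (by omega)⟩⟩
  rcases lt_greedyValue_or_greedyValue_lt (hs.le_sup_add_one hj hjn) hne with ⟨h, hlt⟩ | ⟨h, hlt⟩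
  · exact Or.inl ⟨Nat.even_iff.mpr h, hlt⟩
  · exact Or.inr ⟨Nat.odd_iff.mpr (by omega), hlt⟩

theorem eq_greedyValue_one_of_consecutive (ht : IsRGF n t) (hst : rgcLtAt k s t)
    (hcons : ¬ ∃ u, IsRGF n u ∧ rgcLt n s u ∧ rgcLt n u t) (hkj : k < j) (hjn : j < n) :
    t j = greedyValue 1 t j := by
  by_contra hne
  have hj : 0 < j := by omega
  refine hcons ⟨prefixThen t j (greedyValue 1 t j),
    isRGF_prefixThen ht hj greedyValue_le_sup_add_one,
    ⟨k, by omega, hst.congr_right fun i hi => prefixThen_of_lt (by omega)⟩,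
    ⟨j, hjn, rgcLtAt_prefixThen_left.mpr ?_⟩⟩
  rcases lt_greedyValue_or_greedyValue_lt (ht.le_sup_add_one hj hjn) hne with ⟨h, hlt⟩ | ⟨h, hlt⟩
  · exact Or.inr ⟨Nat.odd_iff.mpr h, hlt⟩
  · exact Or.inl ⟨Nat.even_iff.mpr (by omega), hlt⟩

end Consecutive

theorem stmt9_general (n : ℕ)
    (s t : ℕ → ℕ) (hs : IsRGF n s) (ht : IsRGF n t)
    (hst : rgcLt n s t)
    (hcons : ¬ ∃ u, IsRGF n u ∧ rgcLt n s u ∧ rgcLt n u t) :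
    ∃ k, ∀ i < n, s i ≠ t i → k ≤ i ∧ i < k + 3 := by
  obtain ⟨k, -, hkst⟩ := rgcLt_iff_exists_rgcLtAt.mp hst
  have hs0 := eq_zero_of_forall_eq_greedyValue fun j hkj hjn =>
    eq_greedyValue_zero_of_consecutive hs hkst hcons hkj hjn
  have ht0 := eq_zero_of_forall_eq_greedyValue fun j hkj hjn =>
    eq_greedyValue_one_of_consecutive ht hkst hcons hkj hjn
  refine ⟨k, fun i hin hne => ⟨?_, ?_⟩⟩
  · by_contra! hik
    exact hne (hkst.1 i hik)
  · by_contra! hik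
    exact hne ((hs0 hik hin).trans (ht0 hik hin).symm)

/-- consecutive elements of `R_n` in `≺` order differ in at most
3 adjacent positions. -/
theorem stmt9 (n : ℕ) (hn : 1 ≤ n)
    (s t : ℕ → ℕ) (hs : IsRGF n s) (ht : IsRGF n t)
    (hst : rgcLt n s t)
    (hcons : ¬ ∃ u, IsRGF n u ∧ rgcLt n s u ∧ rgcLt n u t) :
    ∃ k, ∀ i < n, s i ≠ t i → k ≤ i ∧ i < k + 3 :=
  stmt9_general n s t hs ht hst hcons
end

section
/- For any odd b ≥ 1 and n > b, if s and t are consecutive sequences in the list of R*_n(b) ordered by the Reflected Gray Code Order ≺, then s and t differ in at most 5 positions. -/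
set_option linter.unusedSectionVars false

/-- max of first `j` entries -/
def Mv (x : ℕ → ℕ) (j : ℕ) : ℕ := (Finset.range j).sup x
/-- sum of first `j` entries -/
def Sv (x : ℕ → ℕ) (j : ℕ) : ℕ := ∑ i ∈ Finset.range j, x i

lemma Mv_succ (x : ℕ → ℕ) (j : ℕ) : Mv x (j + 1) = max (Mv x j) (x j) := by
  rw [Mv, Mv, Finset.range_add_one, Finset.sup_insert]; exact max_comm _ _

lemma Sv_succ (x : ℕ → ℕ) (j : ℕ) : Sv x (j + 1) = Sv x j + x j := by
  rw [Sv, Sv, Finset.sum_range_succ]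

lemma Mv_mono (x : ℕ → ℕ) {j l : ℕ} (h : j ≤ l) : Mv x j ≤ Mv x l :=
  Finset.sup_mono (Finset.range_subset_range.2 h)

lemma le_Mv (x : ℕ → ℕ) {i j : ℕ} (h : i < j) : x i ≤ Mv x j :=
  Finset.le_sup (Finset.mem_range.2 h)

lemma Mv_congr {x y : ℕ → ℕ} {j : ℕ} (h : ∀ i < j, x i = y i) : Mv x j = Mv y j := by
  unfold Mv; apply Finset.sup_congr rfl
  intro i hi; exact h i (Finset.mem_range.1 hi)

lemma Sv_congr {x y : ℕ → ℕ} {j : ℕ} (h : ∀ i < j, x i = y i) : Sv x j = Sv y j := by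
  unfold Sv; apply Finset.sum_congr rfl
  intro i hi; exact h i (Finset.mem_range.1 hi)

lemma Mv_le_b {n b : ℕ} {x : ℕ → ℕ} (hx : ∀ i < n, x i ≤ b) {j : ℕ} (hj : j ≤ n) :
    Mv x j ≤ b :=
  Finset.sup_le fun i hi => hx i (lt_of_lt_of_le (Finset.mem_range.1 hi) hj)

/-- RGF step bound, valid for all positions below n. -/
lemma rgf_le {n : ℕ} {x : ℕ → ℕ} (hx : IsRGF n x) {j : ℕ} (_ : j < n) :
    x j ≤ Mv x j + 1 := by
  cases j with
  | zero => simp [hx.1]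
  | succ i => exact hx.2 i ‹i + 1 < n›

lemma Mv_step {n : ℕ} {x : ℕ → ℕ} (hx : IsRGF n x) {j : ℕ} (hj : j < n) :
    Mv x (j + 1) ≤ Mv x j + 1 := by
  rw [Mv_succ]; exact max_le (Nat.le_succ _) (rgf_le hx hj)

/-- max grows at most 1 per step. -/
lemma Mv_add {n : ℕ} {x : ℕ → ℕ} (hx : IsRGF n x) {j d : ℕ} (h : j + d ≤ n) :
    Mv x (j + d) ≤ Mv x j + d := by
  induction d with
  | zero => simp
  | succ d ih =>
    have h1 : j + d < n := by omega
    calc Mv x (j + d + 1) ≤ Mv x (j + d) + 1 := Mv_step hx h1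
    _ ≤ Mv x j + d + 1 := by have := ih (by omega); omega

/-- "reach" lemma: feasibility margin is nonnegative. -/
lemma reach {n b : ℕ} {x : ℕ → ℕ} (hx : InRnbStar n b x) {j : ℕ} (hj : j ≤ n) :
    b + j ≤ Mv x j + n := by
  obtain ⟨i, hi, hib⟩ := hx.2.2
  have h1 : b ≤ Mv x n := hib ▸ le_Mv x hi
  obtain ⟨d, rfl⟩ := Nat.le.dest hj
  have := Mv_add hx.1 (le_refl (j + d))
  omega

/-- Modification lemma: change position `j` of `x` to `v` and complete by climbing. -/
lemma mod_exists {n b : ℕ} {x : ℕ → ℕ} (hx : InRnbStar n b x)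
    {j v : ℕ} (hj1 : 1 ≤ j) (hjn : j < n) (hvb : v ≤ b) (hvM : v ≤ Mv x j + 1)
    (hfeas : b + (j + 1) ≤ max (Mv x j) v + n) :
    ∃ u, InRnbStar n b u ∧ (∀ i < j, u i = x i) ∧ u j = v := by
  classical
  set m : ℕ := max (Mv x j) v with hm
  set u : ℕ → ℕ := fun i => if i < j then x i else if i = j then v else min b (m + (i - j)) with hu
  have hpre : ∀ i < j, u i = x i := fun i hi => by simp [hu, hi]
  have huj : u j = v := by simp [hu]
  have hMb : Mv x j ≤ b := Mv_le_b hx.2.1 (le_of_lt hjn)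
  have hmb : m ≤ b := max_le hMb hvb
  have hMuj : Mv u j = Mv x j := Mv_congr hpre
  have hgt : ∀ i, j < i → u i = min b (m + (i - j)) := by
    intro i hi; simp only [hu]; rw [if_neg (by omega), if_neg (by omega)]
  -- sup formula above j
  have hMvu : ∀ d, Mv u (j + 1 + d) = min b (m + d) := by
    intro d
    induction d with
    | zero =>
      rw [show j + 1 + 0 = j + 1 by rfl, Mv_succ, hMuj, huj]
      have : min b m = m := min_eq_right hmb
      omega
    | succ d ih =>
      rw [show j + 1 + (d + 1) = (j + 1 + d) + 1 by omega, Mv_succ, ih,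
        hgt (j + 1 + d) (by omega)]
      have : j + 1 + d - j = d + 1 := by omega
      rw [this]
      omega
  have hub : ∀ i < n, u i ≤ b := by
    intro i hi
    rcases lt_trichotomy i j with h | h | h
    · rw [hpre i h]; exact hx.2.1 i hi
    · rw [h, huj]; exact hvb
    · rw [hgt i h]; omega
  have hrgf : IsRGF n u := by
    constructor
    · rw [hpre 0 (by omega)]; exact hx.1.1
    · intro i hi
      rcases lt_trichotomy (i + 1) j with h | h | h
      · rw [hpre (i + 1) h, show (Finset.range (i+1)).sup u = Mv u (i+1) from rfl,
          Mv_congr (fun l hl => hpre l (by omega))]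
        exact hx.1.2 i (by omega)
      · rw [h, huj, show (Finset.range j).sup u = Mv u j from rfl, hMuj]
        exact hvM
      · have hd : ∃ d, i + 1 = j + 1 + d := ⟨i - j, by omega⟩
        obtain ⟨d, hd⟩ := hd
        rw [hd, hgt (j + 1 + d) (by omega),
          show (Finset.range (j+1+d)).sup u = Mv u (j+1+d) from rfl, hMvu d]
        have : j + 1 + d - j = d + 1 := by omega
        rw [this]
        omega
  refine ⟨u, ⟨hrgf, hub, ?_⟩, hpre, huj⟩
  -- reaches b
  by_cases hvb' : v = b
  · exact ⟨j, hjn, by rw [huj, hvb']⟩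
  · by_cases hMB : Mv x j = b
    · obtain ⟨i, hi, hieq⟩ := Finset.exists_mem_eq_sup (Finset.range j)
        ⟨0, Finset.mem_range.2 (by omega)⟩ x
      refine ⟨i, by have := Finset.mem_range.1 hi; omega, ?_⟩
      have hij : i < j := Finset.mem_range.1 hi
      rw [hpre i hij]
      have : Mv x j = x i := hieq
      omega
    · -- m < b, so n ≥ j + 2 and the climb hits b at n - 1
      have hmlt : m < b := by omega
      have hn2 : j + 2 ≤ n := by omega
      have hd : ∃ d, n - 1 = j + 1 + d := ⟨n - j - 2, by omega⟩
      obtain ⟨d, hd⟩ := hd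
      refine ⟨n - 1, by omega, ?_⟩
      rw [hd, hgt (j + 1 + d) (by omega)]
      have : j + 1 + d - j = d + 1 := by omega
      rw [this]
      omega

section Greedy

variable {n b k : ℕ} {s t : ℕ → ℕ}
variable (hs : InRnbStar n b s) (ht : InRnbStar n b t)
variable (hk : k < n) (hk1 : 1 ≤ k) (hpre : ∀ i < k, s i = t i)
variable (hdir : (Even (Sv s k) ∧ s k < t k) ∨ (Odd (Sv s k) ∧ t k < s k))
variable (hcons : ¬ ∃ u, InRnbStar n b u ∧ rgcLt n s u ∧ rgcLt n u t)

include hk hpre hdir in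
/-- anything agreeing with s up to beyond k is ≺ t. -/
lemma u_lt_t {u : ℕ → ℕ} {j : ℕ} (hkj : k < j) (hagree : ∀ i < j, u i = s i) :
    rgcLt n u t := by
  refine ⟨k, hk, fun i hi => (hagree i (by omega)).trans (hpre i hi), ?_⟩
  have hSv : (∑ i ∈ Finset.range k, u i) = Sv s k := Sv_congr fun i hi => hagree i (by omega)
  have huk : u k = s k := hagree k hkj
  rcases hdir with ⟨he, hlt⟩ | ⟨ho, hlt⟩
  · exact Or.inl ⟨by rw [hSv]; exact he, by rw [huk]; exact hlt⟩
  · exact Or.inr ⟨by rw [hSv]; exact ho, by rw [huk]; exact hlt⟩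

include hk hpre hdir in
/-- anything agreeing with t up to beyond k is ≻ s. -/
lemma s_lt_u {u : ℕ → ℕ} {j : ℕ} (hkj : k < j) (hagree : ∀ i < j, u i = t i) :
    rgcLt n s u := by
  refine ⟨k, hk, fun i hi => (hpre i hi).trans (hagree i (by omega)).symm, ?_⟩
  have huk : u k = t k := hagree k hkj
  rcases hdir with ⟨he, hlt⟩ | ⟨ho, hlt⟩
  · exact Or.inl ⟨he, by rw [huk]; exact hlt⟩
  · exact Or.inr ⟨ho, by rw [huk]; exact hlt⟩

include hs ht hk hk1 hpre hdir hcons in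
lemma G1 {j : ℕ} (hkj : k < j) (hjn : j < n) (hev : Even (Sv s j)) :
    s j = min b (Mv s j + 1) := by
  have hle : s j ≤ min b (Mv s j + 1) := le_min (hs.2.1 j hjn) (rgf_le hs.1 hjn)
  rcases eq_or_lt_of_le hle with h | hlt
  · exact h
  exfalso
  have hr : b + j ≤ Mv s j + n := reach hs (le_of_lt hjn)
  have hfeas : b + (j + 1) ≤ max (Mv s j) (min b (Mv s j + 1)) + n := by omega
  obtain ⟨u, hu, hagree, huj⟩ := mod_exists hs (by omega) hjn (min_le_left _ _)
    (min_le_right _ _) hfeas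
  refine hcons ⟨u, hu, ⟨j, hjn, fun i hi => (hagree i hi).symm, Or.inl ⟨hev, by omega⟩⟩,
    u_lt_t hk hpre hdir hkj hagree⟩

include hs ht hk hk1 hpre hdir hcons in
lemma G2 {j : ℕ} (hkj : k < j) (hjn : j < n) (hod : Odd (Sv s j)) :
    s j = 0 ∨ b + j = Mv s j + n := by
  by_contra hcon
  push_neg at hcon
  obtain ⟨hne0, hnf⟩ := hcon
  have hr : b + j ≤ Mv s j + n := reach hs (le_of_lt hjn)
  have hr1 : b + (j + 1) ≤ Mv s (j + 1) + n := reach hs (by omega)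
  have hMs : Mv s (j + 1) = max (Mv s j) (s j) := Mv_succ s j
  have hsj : s j ≤ Mv s j + 1 := rgf_le hs.1 hjn
  have hfeas : b + (j + 1) ≤ max (Mv s j) (s j - 1) + n := by omega
  obtain ⟨u, hu, hagree, huj⟩ := mod_exists hs (by omega) hjn
    (by have := hs.2.1 j hjn; omega) (by omega) hfeas
  refine hcons ⟨u, hu, ⟨j, hjn, fun i hi => (hagree i hi).symm, Or.inr ⟨hod, by omega⟩⟩,
    u_lt_t hk hpre hdir hkj hagree⟩

include hs ht hk hk1 hpre hdir hcons in
lemma H1 {j : ℕ} (hkj : k < j) (hjn : j < n) (hod : Odd (Sv t j)) :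
    t j = min b (Mv t j + 1) := by
  have hle : t j ≤ min b (Mv t j + 1) := le_min (ht.2.1 j hjn) (rgf_le ht.1 hjn)
  rcases eq_or_lt_of_le hle with h | hlt
  · exact h
  exfalso
  have hr : b + j ≤ Mv t j + n := reach ht (le_of_lt hjn)
  have hfeas : b + (j + 1) ≤ max (Mv t j) (min b (Mv t j + 1)) + n := by omega
  obtain ⟨u, hu, hagree, huj⟩ := mod_exists ht (by omega) hjn (min_le_left _ _)
    (min_le_right _ _) hfeas
  have hSv : (∑ i ∈ Finset.range j, u i) = Sv t j := Sv_congr fun i hi => hagree i hi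
  refine hcons ⟨u, hu, s_lt_u hk hpre hdir hkj hagree,
    ⟨j, hjn, fun i hi => hagree i hi, Or.inr ⟨by rw [hSv]; exact hod, by omega⟩⟩⟩

include hs ht hk hk1 hpre hdir hcons in
lemma H2 {j : ℕ} (hkj : k < j) (hjn : j < n) (hev : Even (Sv t j)) :
    t j = 0 ∨ b + j = Mv t j + n := by
  by_contra hcon
  push_neg at hcon
  obtain ⟨hne0, hnf⟩ := hcon
  have hr : b + j ≤ Mv t j + n := reach ht (le_of_lt hjn)
  have hr1 : b + (j + 1) ≤ Mv t (j + 1) + n := reach ht (by omega)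
  have hMs : Mv t (j + 1) = max (Mv t j) (t j) := Mv_succ t j
  have htj : t j ≤ Mv t j + 1 := rgf_le ht.1 hjn
  have hfeas : b + (j + 1) ≤ max (Mv t j) (t j - 1) + n := by omega
  obtain ⟨u, hu, hagree, huj⟩ := mod_exists ht (by omega) hjn
    (by have := ht.2.1 j hjn; omega) (by omega) hfeas
  have hSv : (∑ i ∈ Finset.range j, u i) = Sv t j := Sv_congr fun i hi => hagree i hi
  refine hcons ⟨u, hu, s_lt_u hk hpre hdir hkj hagree,
    ⟨j, hjn, fun i hi => hagree i hi, Or.inl ⟨by rw [hSv]; exact hev, by omega⟩⟩⟩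

include hs ht hk hk1 hpre hdir hcons in
lemma Kadj : (Even (Sv s k) ∧ t k = s k + 1) ∨ (Odd (Sv s k) ∧ s k = t k + 1) := by
  have hMk : Mv s k = Mv t k := Mv_congr hpre
  rcases hdir with ⟨he, hlt⟩ | ⟨ho, hlt⟩
  · left; refine ⟨he, ?_⟩
    by_contra hne
    have hlt2 : s k + 1 < t k := by omega
    have htkb : t k ≤ b := ht.2.1 k hk
    have htkM : t k ≤ Mv t k + 1 := rgf_le ht.1 hk
    have hr1 : b + (k + 1) ≤ Mv s (k + 1) + n := reach hs (by omega)
    have hMs : Mv s (k + 1) = max (Mv s k) (s k) := Mv_succ s k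
    have hfeas : b + (k + 1) ≤ max (Mv s k) (s k + 1) + n := by omega
    obtain ⟨u, hu, hagree, huk⟩ := mod_exists hs hk1 hk (by omega) (by omega) hfeas
    have hSv : (∑ i ∈ Finset.range k, u i) = Sv s k := Sv_congr fun i hi => hagree i hi
    refine hcons ⟨u, hu, ⟨k, hk, fun i hi => (hagree i hi).symm, Or.inl ⟨he, by omega⟩⟩,
      ⟨k, hk, fun i hi => (hagree i hi).trans (hpre i hi), Or.inl ⟨by rw [hSv]; exact he, by omega⟩⟩⟩
  · right; refine ⟨ho, ?_⟩
    by_contra hne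
    have hlt2 : t k + 1 < s k := by omega
    have hskb : s k ≤ b := hs.2.1 k hk
    have hskM : s k ≤ Mv s k + 1 := rgf_le hs.1 hk
    have hr1 : b + (k + 1) ≤ Mv t (k + 1) + n := reach ht (by omega)
    have hMs : Mv t (k + 1) = max (Mv t k) (t k) := Mv_succ t k
    have hfeas : b + (k + 1) ≤ max (Mv s k) (s k - 1) + n := by omega
    obtain ⟨u, hu, hagree, huk⟩ := mod_exists hs hk1 hk (by omega) (by omega) hfeas
    have hSv : (∑ i ∈ Finset.range k, u i) = Sv s k := Sv_congr fun i hi => hagree i hi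
    refine hcons ⟨u, hu, ⟨k, hk, fun i hi => (hagree i hi).symm, Or.inr ⟨ho, by omega⟩⟩,
      ⟨k, hk, fun i hi => (hagree i hi).trans (hpre i hi), Or.inr ⟨by rw [hSv]; exact ho, by omega⟩⟩⟩

end Greedy

lemma forced {n b : ℕ} {x : ℕ → ℕ} (hx : InRnbStar n b x) {j : ℕ} (hjn : j < n)
    (hf : b + j = Mv x j + n) : x j = Mv x j + 1 := by
  have h1 := reach hx (show j + 1 ≤ n by omega)
  rw [Mv_succ] at h1
  have h2 := rgf_le hx.1 hjn
  omega

lemma forced_up {n b : ℕ} {x : ℕ → ℕ} (hx : InRnbStar n b x) {j l : ℕ} (hjl : j ≤ l)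
    (hln : l ≤ n) (hf : b + j = Mv x j + n) : b + l = Mv x l + n := by
  induction l, hjl using Nat.le_induction with
  | base => exact hf
  | succ l hl ih =>
    have h := ih (by omega)
    have hxl := forced hx (show l < n by omega) h
    rw [Mv_succ, hxl]
    omega

lemma Ml_eq {n b k : ℕ} {x : ℕ → ℕ} (hx : InRnbStar n b x)
    (hblk : ∀ l, k + 3 ≤ l → l < n → b + l < Mv x l + n → x l = 0) :
    ∀ l, k + 3 ≤ l → l ≤ n → b + l < Mv x l + n → Mv x l = Mv x (k + 3) := by
  intro l h3
  induction l, h3 using Nat.le_induction with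
  | base => intro _ _; rfl
  | succ l hl ih =>
    intro hln hg
    have hln' : l < n := by omega
    have hstep := Mv_step hx.1 hln'
    have hgl : b + l < Mv x l + n := by omega
    have h0 := hblk l hl hln' hgl
    have hih := ih (by omega) hgl
    rw [Mv_succ, h0]
    omega

section Struct

variable {n b k : ℕ} {s t : ℕ → ℕ}
variable (hs : InRnbStar n b s) (ht : InRnbStar n b t)
variable (hk : k < n) (hk1 : 1 ≤ k) (hpre : ∀ i < k, s i = t i)
variable (hdir : (Even (Sv s k) ∧ s k < t k) ∨ (Odd (Sv s k) ∧ t k < s k))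
variable (hcons : ¬ ∃ u, InRnbStar n b u ∧ rgcLt n s u ∧ rgcLt n u t)

include hs ht hk hk1 hpre hdir hcons in
lemma Zs {j : ℕ} (hkj : k < j) (hjn : j ≤ n) (hod : Odd (Sv s j)) :
    ∀ l, j ≤ l → l ≤ n → b + l < Mv s l + n → Odd (Sv s l) := by
  intro l hjl
  induction l, hjl using Nat.le_induction with
  | base => intro _ _; exact hod
  | succ l hl ih =>
    intro hln hg
    have hln' : l < n := by omega
    have hstep : Mv s (l + 1) ≤ Mv s l + 1 := Mv_step hs.1 hln'
    have hgl : b + l < Mv s l + n := by omega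
    have hodl := ih (by omega) hgl
    have h0 : s l = 0 := by
      rcases G2 hs ht hk hk1 hpre hdir hcons (by omega) hln' hodl with h | h
      · exact h
      · omega
    rw [Sv_succ, h0]
    simpa using hodl

include hs ht hk hk1 hpre hdir hcons in
lemma Zt {j : ℕ} (hkj : k < j) (hjn : j ≤ n) (hev : Even (Sv t j)) :
    ∀ l, j ≤ l → l ≤ n → b + l < Mv t l + n → Even (Sv t l) := by
  intro l hjl
  induction l, hjl using Nat.le_induction with
  | base => intro _ _; exact hev
  | succ l hl ih =>
    intro hln hg
    have hln' : l < n := by omega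
    have hstep : Mv t (l + 1) ≤ Mv t l + 1 := Mv_step ht.1 hln'
    have hgl : b + l < Mv t l + n := by omega
    have hevl := ih (by omega) hgl
    have h0 : t l = 0 := by
      rcases H2 hs ht hk hk1 hpre hdir hcons (by omega) hln' hevl with h | h
      · exact h
      · omega
    rw [Sv_succ, h0]
    simpa using hevl

include hs ht hk hk1 hpre hdir hcons in
lemma blk_s (hbodd : Odd b) :
    ∀ l, k + 3 ≤ l → l < n → b + l < Mv s l + n → s l = 0 := by
  intro l h3 hln hg
  have hk1n : k + 1 < n := by omega
  have hk2n : k + 2 < n := by omega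
  have finish : ∀ j, k < j → j ≤ l → Odd (Sv s j) → s l = 0 := by
    intro j hkj hjl hodj
    have hodl := Zs hs ht hk hk1 hpre hdir hcons hkj (by omega) hodj l hjl (by omega) hg
    rcases G2 hs ht hk hk1 hpre hdir hcons (by omega) hln hodl with h | h
    · exact h
    · omega
  have hr1 := reach hs (show k + 1 ≤ n by omega)
  by_cases hf1 : b + (k + 1) = Mv s (k + 1) + n
  · have := forced_up hs (show k + 1 ≤ l by omega) (le_of_lt hln) hf1
    omega
  · by_cases hp1 : Odd (Sv s (k + 1))
    · exact finish (k + 1) (by omega) (by omega) hp1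
    · have hev1 : Even (Sv s (k + 1)) := Nat.not_odd_iff_even.mp hp1
      have hv1 := G1 hs ht hk hk1 hpre hdir hcons (by omega) hk1n hev1
      by_cases hf2 : b + (k + 2) = Mv s (k + 2) + n
      · have := forced_up hs (show k + 2 ≤ l by omega) (le_of_lt hln) hf2
        omega
      · have hr2 := reach hs (show k + 2 ≤ n by omega)
        by_cases hp2 : Odd (Sv s (k + 2))
        · exact finish (k + 2) (by omega) (by omega) hp2
        · have hev2 : Even (Sv s (k + 2)) := Nat.not_odd_iff_even.mp hp2
          have hSv2 : Sv s (k + 2) = Sv s (k + 1) + s (k + 1) := Sv_succ s (k + 1)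
          have hse : s (k + 1) % 2 = 0 := by
            rw [Nat.even_iff] at hev1 hev2
            omega
          have hb2 : b % 2 = 1 := Nat.odd_iff.mp hbodd
          -- s (k+1) = Mv s (k+1) + 1 and Mv s (k+1) + 2 ≤ b
          have hM1 : s (k + 1) = Mv s (k + 1) + 1 ∧ Mv s (k + 1) + 2 ≤ b := by omega
          have hM2' : Mv s (k + 2) = Mv s (k + 1) + 1 := by
            rw [Mv_succ]
            omega
          have hv2 := G1 hs ht hk hk1 hpre hdir hcons (by omega) hk2n hev2
          have hs2 : s (k + 2) = Mv s (k + 1) + 2 := by omega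
          have hod3 : Odd (Sv s (k + 3)) := by
            have h33 : Sv s (k + 3) = Sv s (k + 2) + s (k + 2) := Sv_succ s (k + 2)
            rw [Nat.odd_iff]
            rw [Nat.even_iff] at hev2
            omega
          exact finish (k + 3) (by omega) h3 hod3

include hs ht hk hk1 hpre hdir hcons in
lemma blk_t (hbodd : Odd b) :
    ∀ l, k + 3 ≤ l → l < n → b + l < Mv t l + n → t l = 0 := by
  intro l h3 hln hg
  have hk1n : k + 1 < n := by omega
  have hk2n : k + 2 < n := by omega
  have finish : ∀ j, k < j → j ≤ l → Even (Sv t j) → t l = 0 := by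
    intro j hkj hjl hevj
    have hevl := Zt hs ht hk hk1 hpre hdir hcons hkj (by omega) hevj l hjl (by omega) hg
    rcases H2 hs ht hk hk1 hpre hdir hcons (by omega) hln hevl with h | h
    · exact h
    · omega
  have hr1 := reach ht (show k + 1 ≤ n by omega)
  by_cases hf1 : b + (k + 1) = Mv t (k + 1) + n
  · have := forced_up ht (show k + 1 ≤ l by omega) (le_of_lt hln) hf1
    omega
  · by_cases hp1 : Even (Sv t (k + 1))
    · exact finish (k + 1) (by omega) (by omega) hp1
    · have hod1 : Odd (Sv t (k + 1)) := Nat.not_even_iff_odd.mp hp1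
      have hv1 := H1 hs ht hk hk1 hpre hdir hcons (by omega) hk1n hod1
      by_cases hf2 : b + (k + 2) = Mv t (k + 2) + n
      · have := forced_up ht (show k + 2 ≤ l by omega) (le_of_lt hln) hf2
        omega
      · have hr2 := reach ht (show k + 2 ≤ n by omega)
        by_cases hp2 : Even (Sv t (k + 2))
        · exact finish (k + 2) (by omega) (by omega) hp2
        · have hod2 : Odd (Sv t (k + 2)) := Nat.not_even_iff_odd.mp hp2
          have hSv2 : Sv t (k + 2) = Sv t (k + 1) + t (k + 1) := Sv_succ t (k + 1)
          have hse : t (k + 1) % 2 = 0 := by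
            rw [Nat.odd_iff] at hod1 hod2
            omega
          have hb2 : b % 2 = 1 := Nat.odd_iff.mp hbodd
          have hM1 : t (k + 1) = Mv t (k + 1) + 1 ∧ Mv t (k + 1) + 2 ≤ b := by omega
          have hM2' : Mv t (k + 2) = Mv t (k + 1) + 1 := by
            rw [Mv_succ]
            omega
          have hv2 := H1 hs ht hk hk1 hpre hdir hcons (by omega) hk2n hod2
          have ht2 : t (k + 2) = Mv t (k + 1) + 2 := by omega
          have hev3 : Even (Sv t (k + 3)) := by
            have h33 : Sv t (k + 3) = Sv t (k + 2) + t (k + 2) := Sv_succ t (k + 2)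
            rw [Nat.even_iff]
            rw [Nat.odd_iff] at hod2
            omega
          exact finish (k + 3) (by omega) h3 hev3

end Struct

section Main

variable {n b k : ℕ} {s t : ℕ → ℕ}
variable (hs : InRnbStar n b s) (ht : InRnbStar n b t)
variable (hk : k < n) (hk1 : 1 ≤ k) (hpre : ∀ i < k, s i = t i)
variable (hdir : (Even (Sv s k) ∧ s k < t k) ∨ (Odd (Sv s k) ∧ t k < s k))
variable (hcons : ¬ ∃ u, InRnbStar n b u ∧ rgcLt n s u ∧ rgcLt n u t)

include hs ht hk hk1 hpre hdir hcons in
lemma Mclaim (hbodd : Odd b) (hk3 : k + 3 ≤ n) :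
    Mv t (k + 3) ≤ Mv s (k + 3) + 2 ∧ Mv s (k + 3) ≤ Mv t (k + 3) + 2 := by
  have hk1n : k + 1 < n := by omega
  have hk2n : k + 2 < n := by omega
  have hMk : Mv s k = Mv t k := Mv_congr hpre
  have hA : Mv s (k + 1) = max (Mv s k) (s k) := Mv_succ s k
  have hB : Mv t (k + 1) = max (Mv t k) (t k) := Mv_succ t k
  have hs3 : Mv s (k + 3) ≤ Mv s (k + 1) + 2 := by
    have h := Mv_add hs.1 (j := k + 1) (d := 2) (by omega)
    rwa [show k + 1 + 2 = k + 3 by omega] at h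
  have ht3 : Mv t (k + 3) ≤ Mv t (k + 1) + 2 := by
    have h := Mv_add ht.1 (j := k + 1) (d := 2) (by omega)
    rwa [show k + 1 + 2 = k + 3 by omega] at h
  have hs13 : Mv s (k + 1) ≤ Mv s (k + 3) := Mv_mono s (by omega)
  have ht13 : Mv t (k + 1) ≤ Mv t (k + 3) := Mv_mono t (by omega)
  have hskM : s k ≤ Mv s k + 1 := rgf_le hs.1 hk
  have htkM : t k ≤ Mv t k + 1 := rgf_le ht.1 hk
  have hskb : s k ≤ b := hs.2.1 k hk
  have htkb : t k ≤ b := ht.2.1 k hk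
  have hSvk : Sv s k = Sv t k := Sv_congr hpre
  have hSvs1 : Sv s (k + 1) = Sv s k + s k := Sv_succ s k
  have hSvt1 : Sv t (k + 1) = Sv t k + t k := Sv_succ t k
  have hKadj := Kadj hs ht hk hk1 hpre hdir hcons
  constructor
  · -- Mv t (k+3) ≤ Mv s (k+3) + 2
    rcases Nat.lt_or_ge (Mv s (k + 1)) (Mv t (k + 1)) with hlt | hge
    swap
    · omega
    -- B > A : so even case, t k = Mk + 1, s k = Mk
    have htk1 : t k = Mv s k + 1 ∧ s k = Mv s k := by
      rcases hKadj with ⟨he, hadj⟩ | ⟨ho, hadj⟩ <;> omega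
    have hev : Even (Sv s k) := by
      rcases hKadj with ⟨he, hadj⟩ | ⟨ho, hadj⟩
      · exact he
      · omega
    rcases Nat.lt_or_ge (Mv t (k + 1) + 1) (Mv t (k + 3)) with h2 | h2
    swap
    · omega
    -- t must step up twice: t(k+1) = B+1
    have hMt2 : Mv t (k + 2) = max (Mv t (k + 1)) (t (k + 1)) := Mv_succ t (k + 1)
    have hMt3' : Mv t (k + 3) = max (Mv t (k + 2)) (t (k + 2)) := Mv_succ t (k + 1 + 1)
    have ht1 : t (k + 1) ≤ Mv t (k + 1) + 1 := rgf_le ht.1 (by omega)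
    have ht2 : t (k + 2) ≤ Mv t (k + 2) + 1 := rgf_le ht.1 (by omega)
    have ht1e : t (k + 1) = Mv t (k + 1) + 1 := by omega
    by_cases hq : Odd (Sv t (k + 1))
    · have hevs1 : Even (Sv s (k + 1)) := by
        rw [Nat.odd_iff] at hq
        rw [Nat.even_iff] at hev ⊢
        omega
      have hg1 := G1 hs ht hk hk1 hpre hdir hcons (by omega) hk1n hevs1
      have hs1v : s (k + 1) = Mv s k + 1 := by omega
      have hle : s (k + 1) ≤ Mv s (k + 3) := le_Mv s (by omega)
      omega
    · have hevq : Even (Sv t (k + 1)) := Nat.not_odd_iff_even.mp hq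
      rcases H2 hs ht hk hk1 hpre hdir hcons (by omega) hk1n hevq with h0 | hf
      · omega
      · have := reach hs (show k + 1 ≤ n by omega)
        omega
  · -- Mv s (k+3) ≤ Mv t (k+3) + 2
    rcases Nat.lt_or_ge (Mv t (k + 1)) (Mv s (k + 1)) with hlt | hge
    swap
    · omega
    have hsk1 : s k = Mv s k + 1 ∧ t k = Mv s k := by
      rcases hKadj with ⟨he, hadj⟩ | ⟨ho, hadj⟩ <;> omega
    have hod : Odd (Sv s k) := by
      rcases hKadj with ⟨he, hadj⟩ | ⟨ho, hadj⟩
      · omega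
      · exact ho
    rcases Nat.lt_or_ge (Mv s (k + 1) + 1) (Mv s (k + 3)) with h2 | h2
    swap
    · omega
    have hMs2 : Mv s (k + 2) = max (Mv s (k + 1)) (s (k + 1)) := Mv_succ s (k + 1)
    have hMs3' : Mv s (k + 3) = max (Mv s (k + 2)) (s (k + 2)) := Mv_succ s (k + 1 + 1)
    have hs1 : s (k + 1) ≤ Mv s (k + 1) + 1 := rgf_le hs.1 (by omega)
    have hs2 : s (k + 2) ≤ Mv s (k + 2) + 1 := rgf_le hs.1 (by omega)
    have hs1e : s (k + 1) = Mv s (k + 1) + 1 := by omega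
    by_cases hq : Odd (Sv s (k + 1))
    · rcases G2 hs ht hk hk1 hpre hdir hcons (by omega) hk1n hq with h0 | hf
      · omega
      · have := reach ht (show k + 1 ≤ n by omega)
        omega
    · have hevp : Even (Sv s (k + 1)) := Nat.not_odd_iff_even.mp hq
      have hodt1 : Odd (Sv t (k + 1)) := by
        rw [Nat.even_iff] at hevp
        rw [Nat.odd_iff] at hod ⊢
        omega
      have hh1 := H1 hs ht hk hk1 hpre hdir hcons (by omega) hk1n hodt1
      have ht1v : t (k + 1) = Mv s k + 1 := by omega
      have hle : t (k + 1) ≤ Mv t (k + 3) := le_Mv t (by omega)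
      omega

end Main

theorem stmt11' (n b : ℕ) (hbodd : Odd b) (hb1 : 1 ≤ b) (hnb : b < n)
    (s t : ℕ → ℕ) (hs : InRnbStar n b s) (ht : InRnbStar n b t)
    (hst : rgcLt n s t)
    (hcons : ¬ ∃ u, InRnbStar n b u ∧ rgcLt n s u ∧ rgcLt n u t) :
    ((Finset.range n).filter (fun i => s i ≠ t i)).card ≤ 5 := by
  obtain ⟨k, hk, hpre, hdir'⟩ := hst
  have hdir : (Even (Sv s k) ∧ s k < t k) ∨ (Odd (Sv s k) ∧ t k < s k) := hdir'
  have hk1 : 1 ≤ k := by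
    rcases Nat.eq_zero_or_pos k with h0 | h
    · exfalso
      have hs0 : s 0 = 0 := hs.1.1
      have ht0 : t 0 = 0 := ht.1.1
      rcases hdir with ⟨_, hlt⟩ | ⟨_, hlt⟩ <;> (subst h0; omega)
    · exact h
  set l0 : ℕ := min (Mv s (k + 3)) (Mv t (k + 3)) + n - b with hl0
  set T : Finset ℕ := insert k (insert (k + 1) (insert (k + 2) (insert l0 {l0 + 1}))) with hT
  have hsub : (Finset.range n).filter (fun i => s i ≠ t i) ⊆ T := by
    intro l hl
    rw [Finset.mem_filter, Finset.mem_range] at hl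
    obtain ⟨hln, hne⟩ := hl
    simp only [hT, Finset.mem_insert, Finset.mem_singleton]
    by_contra hcon
    push_neg at hcon
    obtain ⟨c1, c2, c3, c4, c5⟩ := hcon
    have hlk : k + 3 ≤ l := by
      rcases Nat.lt_or_ge l k with h | h
      · exact absurd (hpre l h) hne
      · omega
    have hk3 : k + 3 ≤ n := by omega
    have hMc := Mclaim hs ht hk hk1 hpre hdir hcons hbodd hk3
    have hrs := reach hs (le_of_lt hln)
    have hrt := reach ht (le_of_lt hln)
    by_cases hfs : b + l < Mv s l + n <;> by_cases hft : b + l < Mv t l + n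
    · -- both not forced: both zero
      have h1 := blk_s hs ht hk hk1 hpre hdir hcons hbodd l hlk hln hfs
      have h2 := blk_t hs ht hk hk1 hpre hdir hcons hbodd l hlk hln hft
      exact hne (by omega)
    · -- s free, t forced
      have hfte : b + l = Mv t l + n := by omega
      have hMs := Ml_eq hs (blk_s hs ht hk hk1 hpre hdir hcons hbodd) l hlk (le_of_lt hln) hfs
      have hMt3 : Mv t (k + 3) ≤ Mv t l := Mv_mono t hlk
      -- so  Mv t (k+3) + n ≤ b + l < Mv s (k+3) + n ≤ Mv t (k+3) + 2 + n
      omega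
    · -- t free, s forced
      have hfse : b + l = Mv s l + n := by omega
      have hMt := Ml_eq ht (blk_t hs ht hk hk1 hpre hdir hcons hbodd) l hlk (le_of_lt hln) hft
      have hMs3 : Mv s (k + 3) ≤ Mv s l := Mv_mono s hlk
      omega
    · -- both forced: equal climb values
      have h1 : b + l = Mv s l + n := by omega
      have h2 : b + l = Mv t l + n := by omega
      have e1 := forced hs hln h1
      have e2 := forced ht hln h2
      exact hne (by omega)
  refine le_trans (Finset.card_le_card hsub) ?_
  have a2 := Finset.card_insert_le l0 ({l0 + 1} : Finset ℕ)
  have a3 := Finset.card_insert_le (k + 2) (insert l0 ({l0 + 1} : Finset ℕ))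
  have a4 := Finset.card_insert_le (k + 1) (insert (k + 2) (insert l0 ({l0 + 1} : Finset ℕ)))
  have a5 := Finset.card_insert_le k (insert (k + 1) (insert (k + 2) (insert l0 ({l0 + 1} : Finset ℕ))))
  have a1 : ({l0 + 1} : Finset ℕ).card = 1 := Finset.card_singleton _
  rw [hT]
  omega

/-- for odd `b` and `n > b`, consecutive elements of `R*_n(b)` in `≺`
order differ in at most 5 positions. -/
theorem stmt11 (n b : ℕ) (hbodd : Odd b) (hb1 : 1 ≤ b) (hnb : b < n)
    (s t : ℕ → ℕ) (hs : InRnbStar n b s) (ht : InRnbStar n b t)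
    (hst : rgcLt n s t)
    (hcons : ¬ ∃ u, InRnbStar n b u ∧ rgcLt n s u ∧ rgcLt n u t) :
    ((Finset.range n).filter (fun i => s i ≠ t i)).card ≤ 5 := by
  exact stmt11' n b hbodd hb1 hnb s t hs ht hst hcons
end

section
/- Let b ≥ 1 and n > b. Every sequence s ∈ R*_n(b) that is ≺-last among elements of R*_n(b) with a given prefix s_1...s_k (k ≤ n-3) with ∑_{i=1}^k s_i odd has the form s_1...s_k 0...0 (a+1)(a+2)...b where a = max{s_i}_{i=1}^k (the increasing tail may be empty if a = b). -/
/-- The sup over an initial segment of an RGF grows by at most 1 per step. -/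
lemma rgf_sup_grow (n : ℕ) (s : ℕ → ℕ) (h : IsRGF n s) (j : ℕ) (hj : 1 ≤ j) :
    ∀ d, j + d ≤ n → (Finset.range (j + d)).sup s ≤ (Finset.range j).sup s + d := by
  obtain ⟨j', rfl⟩ : ∃ j', j = j' + 1 := ⟨j - 1, by omega⟩
  intro d
  induction d with
  | zero => simp
  | succ d ih =>
    intro hd
    have h2 : s (j' + 1 + d) ≤ (Finset.range (j' + 1 + d)).sup s + 1 := by
      rw [show j' + 1 + d = (j' + d) + 1 from by omega]
      exact h.2 (j' + d) (by omega)
    have h3 := ih (by omega)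
    have h1 : (Finset.range (j' + 1 + (d + 1))).sup s
        = (Finset.range (j' + 1 + d)).sup s ⊔ s (j' + 1 + d) := by
      rw [show j' + 1 + (d + 1) = (j' + 1 + d) + 1 by omega, Finset.range_add_one,
        Finset.sup_insert, sup_comm]
    rw [h1]
    simp only [sup_le_iff]
    omega

/-- a `≺`-last element of `R*_n(b)` with a given prefix whose sum is odd
has the form `s_1…s_k 0…0 (a+1)(a+2)…b` with `a` the maximum of the prefix. -/
theorem stmt12 (n b k : ℕ) (hb1 : 1 ≤ b) (hnb : b < n) (hk1 : 1 ≤ k) (hk : k + 3 ≤ n)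
    (s : ℕ → ℕ) (hs : InRnbStar n b s)
    (hodd : Odd (∑ i ∈ Finset.range k, s i))
    (hlast : ∀ u : ℕ → ℕ, InRnbStar n b u → (∀ i < k, u i = s i) →
      (∀ i < n, u i = s i) ∨ rgcLt n u s) :
    ∀ i, k ≤ i → i < n →
      (i + (b - (Finset.range k).sup s) < n → s i = 0) ∧
      (n ≤ i + (b - (Finset.range k).sup s) → s i + n = i + b + 1) := by
  set a := (Finset.range k).sup s with ha
  obtain ⟨hrgf, hble, iw, hiwn, hiwb⟩ := hs
  -- basic facts about a
  have ha1 : 1 ≤ a := by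
    by_contra h
    push_neg at h
    have hz : ∑ i ∈ Finset.range k, s i = 0 :=
      Finset.sum_eq_zero fun i hi => by
        have := Finset.le_sup (f := s) hi
        omega
    rw [hz] at hodd
    simp at hodd
  have hab : a ≤ b := Finset.sup_le fun i hi => by
    have hik := Finset.mem_range.mp hi
    exact hble i (by omega)
  have hbsup : (Finset.range n).sup s = b := by
    refine le_antisymm (Finset.sup_le fun i hi => hble i (Finset.mem_range.mp hi)) ?_
    calc b = s iw := hiwb.symm
    _ ≤ _ := Finset.le_sup (Finset.mem_range.mpr hiwn)
  have hkban : k + (b - a) ≤ n := by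
    by_contra h
    push_neg at h
    have hgrow := rgf_sup_grow n s hrgf k hk1 (n - k) (by omega)
    rw [show k + (n - k) = n by omega, hbsup, ← ha] at hgrow
    omega
  set m := n - (b - a) with hmdef
  have hm : m + (b - a) = n := by omega
  have hkm : k ≤ m := by omega
  have hmn : m ≤ n := by omega
  -- the candidate last sequence
  set t : ℕ → ℕ := fun i => if i < k then s i else if i < m then 0 else i + b + 1 - n
    with htdef
  have htpre : ∀ i < k, t i = s i := fun i hi => by simp [htdef, hi]
  have hsupk : ∀ j ≤ k, (Finset.range j).sup t = (Finset.range j).sup s :=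
    fun j hj => Finset.sup_congr rfl fun i hi =>
      htpre i (by have := Finset.mem_range.mp hi; omega)
  have httail : ∀ i, m ≤ i → t i = i + b + 1 - n := fun i hi => by
    simp only [htdef]
    rw [if_neg (by omega), if_neg (by omega)]
  have htzero : ∀ i, k ≤ i → i < m → t i = 0 := fun i h1 h2 => by
    simp only [htdef]
    rw [if_neg (by omega), if_pos h2]
  -- sup of initial segments of t in the tail region
  have hsupt : ∀ j, m ≤ j → j ≤ n → (Finset.range j).sup t = j + b - n := by
    intro j hmj hjn
    refine le_antisymm (Finset.sup_le fun i hi => ?_) ?_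
    · have hij := Finset.mem_range.mp hi
      by_cases h1 : i < k
      · have : s i ≤ a := Finset.le_sup (Finset.mem_range.mpr h1)
        rw [htpre i h1]
        omega
      · by_cases h2 : i < m
        · rw [htzero i (by omega) h2]
          omega
        · rw [httail i (by omega)]
          omega
    · rcases eq_or_lt_of_le hmj with rfl | hlt
      · have h1 : (Finset.range k).sup t ≤ (Finset.range m).sup t :=
          Finset.sup_mono (Finset.range_subset_range.mpr hkm)
        rw [hsupk k le_rfl, ← ha] at h1
        omega
      · have h1 : t (j - 1) ≤ (Finset.range j).sup t :=
          Finset.le_sup (Finset.mem_range.mpr (by omega))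
        rw [httail (j - 1) (by omega)] at h1
        omega
  -- t is in R*_n(b)
  have htstar : InRnbStar n b t := by
    refine ⟨⟨by rw [htpre 0 hk1]; exact hrgf.1, ?_⟩, ?_, ?_⟩
    · intro i hi
      by_cases h1 : i + 1 < k
      · rw [htpre (i + 1) h1, hsupk (i + 1) (by omega)]
        exact hrgf.2 i hi
      · by_cases h2 : i + 1 < m
        · rw [htzero (i + 1) (by omega) h2]
          omega
        · rw [httail (i + 1) (by omega), hsupt (i + 1) (by omega) (by omega)]
          omega
    · intro i hi
      by_cases h1 : i < k
      · rw [htpre i h1]; exact hble i (by omega)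
      · by_cases h2 : i < m
        · rw [htzero i (by omega) h2]; omega
        · rw [httail i (by omega)]; omega
    · by_cases hmn' : m < n
      · exact ⟨n - 1, by omega, by rw [httail (n - 1) (by omega)]; omega⟩
      · have hab' : a = b := by omega
        obtain ⟨i0, hi0, hi0eq⟩ :=
          Finset.exists_mem_eq_sup (Finset.range k) ⟨0, Finset.mem_range.mpr hk1⟩ s
        have hi0k := Finset.mem_range.mp hi0
        exact ⟨i0, by omega, by rw [htpre i0 hi0k, ← hi0eq, ← ha, hab']⟩
  -- t is not ≺ s
  have hnot : ¬ rgcLt n t s := by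
    rintro ⟨j, hjn, hagree, hcase⟩
    have hsame : ∀ i < j, t i = s i := hagree
    by_cases h1 : j < k
    · rw [htpre j h1] at hcase
      rcases hcase with ⟨_, h⟩ | ⟨_, h⟩ <;> omega
    · by_cases h2 : j < m
      · -- sum over range j of t equals the (odd) prefix sum
        have hsum : ∑ i ∈ Finset.range j, t i = ∑ i ∈ Finset.range k, s i := by
          rw [← Finset.sum_range_add_sum_Ico t (show k ≤ j by omega)]
          have hz : ∑ i ∈ Finset.Ico k j, t i = 0 :=
            Finset.sum_eq_zero fun i hi => by
              have := Finset.mem_Ico.mp hi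
              exact htzero i this.1 (by omega)
          have hp : ∑ i ∈ Finset.range k, t i = ∑ i ∈ Finset.range k, s i :=
            Finset.sum_congr rfl fun i hi => htpre i (Finset.mem_range.mp hi)
          omega
        rw [hsum] at hcase
        rw [htzero j (by omega) h2] at hcase
        rcases hcase with ⟨he, _⟩ | ⟨_, h⟩
        · exact (Nat.not_even_iff_odd.mpr hodd) he
        · omega
      · -- tail region
        have hjm : m ≤ j := by omega
        have hsupj : (Finset.range j).sup t = j + b - n := hsupt j hjm (by omega)
        have hsups : (Finset.range j).sup s = j + b - n := by
          rw [← hsupj]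
          exact Finset.sup_congr rfl fun i hi =>
            (hsame i (Finset.mem_range.mp hi)).symm
        have htj : t j = j + b + 1 - n := httail j hjm
        rcases hcase with ⟨_, hlt⟩ | ⟨_, hlt⟩
        · -- t j < s j impossible: s j ≤ sup + 1 = t j
          have hgrow := hrgf.2 (j - 1) (by omega)
          rw [show j - 1 + 1 = j by omega] at hgrow
          rw [hsups] at hgrow
          omega
        · -- s j < t j impossible: then s can never reach b
          have hsj : s j ≤ j + b - n := by omega
          have hsupj1 : (Finset.range (j + 1)).sup s ≤ j + b - n := by
            refine Finset.sup_le fun i hi => ?_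
            have hij := Finset.mem_range.mp hi
            rcases Nat.lt_succ_iff_lt_or_eq.mp hij with h | rfl
            · have : s i ≤ (Finset.range j).sup s := Finset.le_sup (Finset.mem_range.mpr h)
              omega
            · exact hsj
          have hgrow := rgf_sup_grow n s hrgf (j + 1) (by omega) (n - (j + 1)) (by omega)
          rw [show j + 1 + (n - (j + 1)) = n by omega, hbsup] at hgrow
          omega
  -- conclude s = t via maximality
  have heq : ∀ i < n, t i = s i := by
    rcases hlast t htstar htpre with h | h
    · exact h
    · exact absurd h hnot
  intro i hki hin
  constructor
  · intro hlt
    rw [← heq i hin]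
    exact htzero i hki (by omega)
  · intro hge
    rw [← heq i hin, httail i (by omega)]
    omega
end

section
/- Let b ≥ 1 be odd and n ≥ 1. In the Reflected Gray Code Order ≺ on R_n(b), if s ≺ t are consecutive, k is the first position where they differ, and k ≤ n - 3, then s_{k+3} = s_{k+4} = ... = s_n = 0 and t_{k+3} = t_{k+4} = ... = t_n = 0. -/
/-- auxiliary: running (sum, sup) of the extremal extension. -/
def extAux (b k : ℕ) (s : ℕ → ℕ) (e : Bool) : ℕ → ℕ × ℕ
  | 0 => (0, 0)
  | (i+1) =>
      let p := extAux b k s e i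
      let v := if i ≤ k then s i
               else if (Even p.1 ↔ e = true) then min b (p.2 + 1) else 0
      (p.1 + v, max p.2 v)

/-- the extremal extension of `s` beyond position `k`. -/
def ext (b k : ℕ) (s : ℕ → ℕ) (e : Bool) (i : ℕ) : ℕ :=
  if i ≤ k then s i
  else if (Even (extAux b k s e i).1 ↔ e = true) then min b ((extAux b k s e i).2 + 1) else 0

lemma extAux_succ (b k : ℕ) (s : ℕ → ℕ) (e : Bool) (i : ℕ) :
    extAux b k s e (i+1) = ((extAux b k s e i).1 + ext b k s e i,
      max (extAux b k s e i).2 (ext b k s e i)) := rfl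

lemma extAux_fst (b k : ℕ) (s : ℕ → ℕ) (e : Bool) (i : ℕ) :
    (extAux b k s e i).1 = ∑ j ∈ Finset.range i, ext b k s e j := by
  induction i with
  | zero => simp [extAux]
  | succ i ih => rw [extAux_succ, Finset.sum_range_succ, ih]

lemma extAux_snd (b k : ℕ) (s : ℕ → ℕ) (e : Bool) (i : ℕ) :
    (extAux b k s e i).2 = (Finset.range i).sup (ext b k s e) := by
  induction i with
  | zero => simp [extAux]
  | succ i ih =>
    rw [extAux_succ, Finset.range_add_one, Finset.sup_insert, ih]
    simp [max_comm]

lemma ext_agree (b k : ℕ) (s : ℕ → ℕ) (e : Bool) (i : ℕ) (h : i ≤ k) :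
    ext b k s e i = s i := if_pos h

lemma ext_zero_propagate (b k : ℕ) (s : ℕ → ℕ) (e : Bool) (j : ℕ) (hj : k < j)
    (hC : ¬ (Even (extAux b k s e j).1 ↔ e = true)) :
    ∀ d, ext b k s e (j + d) = 0 ∧ ¬ (Even (extAux b k s e (j + d)).1 ↔ e = true) := by
  intro d
  induction d with
  | zero =>
    refine ⟨?_, by simpa using hC⟩
    rw [ext, if_neg (by omega : ¬ j + 0 ≤ k)]
    simp only [Nat.add_zero]
    rw [if_neg hC]
  | succ d ih =>
    have hz : ext b k s e (j + d) = 0 := ih.1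
    have : (extAux b k s e (j + (d+1))).1 = (extAux b k s e (j + d)).1 := by
      have : j + (d+1) = (j + d) + 1 := by omega
      rw [this, extAux_succ, hz]
      simp
    constructor
    · rw [ext, if_neg (by omega), if_neg (by rw [this]; exact ih.2)]
    · rw [this]; exact ih.2

lemma ext_zeros (b k : ℕ) (s : ℕ → ℕ) (e : Bool) (hb : Odd b) :
    ∀ i, k + 3 ≤ i → ext b k s e i = 0 := by
  intro i hi
  by_cases h1 : Even (extAux b k s e (k+1)).1 ↔ e = true
  · by_cases h2 : Even (extAux b k s e (k+2)).1 ↔ e = true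
    · set M1 := (extAux b k s e (k+1)).2 with hM1
      have hv1 : ext b k s e (k+1) = min b (M1 + 1) := by
        rw [ext, if_neg (by omega : ¬ k+1 ≤ k), if_pos h1, ← hM1]
      have hS2 : (extAux b k s e (k+2)).1
          = (extAux b k s e (k+1)).1 + ext b k s e (k+1) := by
        rw [show k+2 = (k+1)+1 from rfl, extAux_succ]
      have h12 : Even (extAux b k s e (k+1)).1 ↔ Even (extAux b k s e (k+2)).1 :=
        h1.trans h2.symm
      rw [hS2, Nat.even_add] at h12
      have hv1even : Even (ext b k s e (k+1)) := by tauto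
      have hlt : M1 + 1 < b := by
        rcases le_or_gt b (M1+1) with h | h
        · exfalso
          rw [hv1, min_eq_left h] at hv1even
          exact (Nat.not_even_iff_odd.mpr hb) hv1even
        · exact h
      have hv1' : ext b k s e (k+1) = M1 + 1 := by
        rw [hv1, min_eq_right (by omega)]
      have hM2 : (extAux b k s e (k+2)).2 = M1 + 1 := by
        have h0 : (extAux b k s e (k+2)).2 = max M1 (ext b k s e (k+1)) := by
          rw [show k+2 = (k+1)+1 from rfl, extAux_succ]
        rw [h0, hv1']
        exact max_eq_right (Nat.le_succ M1)
      have hv2 : ext b k s e (k+2) = M1 + 2 := by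
        rw [ext, if_neg (by omega : ¬ k+2 ≤ k), if_pos h2, hM2,
          min_eq_right (by omega)]
      have hS3 : (extAux b k s e (k+3)).1
          = (extAux b k s e (k+2)).1 + (M1 + 2) := by
        rw [show k+3 = (k+2)+1 from rfl, extAux_succ, hv2]
      have hodd2 : ¬ Even (M1 + 2) := by
        rw [hv1'] at hv1even
        rw [show M1+2 = (M1+1)+1 from rfl, Nat.even_add_one]
        simpa using hv1even
      have h3 : ¬ (Even (extAux b k s e (k+3)).1 ↔ e = true) := by
        rw [hS3]
        intro hc
        rw [Nat.even_add] at hc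
        tauto
      have := ext_zero_propagate b k s e (k+3) (by omega) h3 (i - (k+3))
      have h' : k + 3 + (i - (k+3)) = i := by omega
      rw [h'] at this
      exact this.1
    · have := ext_zero_propagate b k s e (k+2) (by omega) h2 (i - (k+2))
      have h' : k + 2 + (i - (k+2)) = i := by omega
      rw [h'] at this
      exact this.1
  · have := ext_zero_propagate b k s e (k+1) (by omega) h1 (i - (k+1))
    have h' : k + 1 + (i - (k+1)) = i := by omega
    rw [h'] at this
    exact this.1

lemma ext_mem (n b k : ℕ) (s : ℕ → ℕ) (e : Bool) (hs : InRnb n b s)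
    (hb1 : 1 ≤ b) (hkn : k < n) : InRnb n b (ext b k s e) := by
  obtain ⟨⟨h0, hgrow⟩, hbd⟩ := hs
  refine ⟨⟨?_, ?_⟩, ?_⟩
  · rw [ext_agree b k s e 0 (Nat.zero_le k), h0]
  · intro i hi
    by_cases h : i + 1 ≤ k
    · rw [ext_agree _ _ _ _ _ h]
      have hsup : (Finset.range (i+1)).sup (ext b k s e) = (Finset.range (i+1)).sup s := by
        refine Finset.sup_congr rfl (fun j hj => ?_)
        exact ext_agree _ _ _ _ _ (by have := Finset.mem_range.mp hj; omega)
      rw [hsup]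
      exact hgrow i hi
    · rw [ext, if_neg h]
      by_cases hc : Even (extAux b k s e (i+1)).1 ↔ e = true
      · rw [if_pos hc, extAux_snd]
        exact min_le_right _ _
      · rw [if_neg hc]; exact Nat.zero_le _
  · intro i hin
    by_cases h : i ≤ k
    · rw [ext_agree _ _ _ _ _ h]; exact hbd i hin
    · rw [ext, if_neg h]
      by_cases hc : Even (extAux b k s e i).1 ↔ e = true
      · rw [if_pos hc]; exact min_le_left _ _
      · rw [if_neg hc]; omega

lemma ext_max_lt (n b k : ℕ) (s : ℕ → ℕ) (hs : InRnb n b s) (j : ℕ) (hj : j < n)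
    (hne : s j ≠ ext b k s true j) (hpre : ∀ i < j, s i = ext b k s true i) :
    rgcLt n s (ext b k s true) := by
  have hjk : k < j := by
    by_contra h
    exact hne (ext_agree b k s true j (by omega)).symm
  have hsum : (extAux b k s true j).1 = ∑ i ∈ Finset.range j, s i := by
    rw [extAux_fst]
    exact Finset.sum_congr rfl (fun i hi => (hpre i (Finset.mem_range.mp hi)).symm)
  have hsup : (extAux b k s true j).2 = (Finset.range j).sup s := by
    rw [extAux_snd]
    exact Finset.sup_congr rfl (fun i hi => (hpre i (Finset.mem_range.mp hi)).symm)
  obtain ⟨m, rfl⟩ : ∃ m, j = m + 1 := ⟨j - 1, by omega⟩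
  refine ⟨m+1, hj, hpre, ?_⟩
  by_cases hev : Even (∑ i ∈ Finset.range (m+1), s i)
  · left
    refine ⟨hev, ?_⟩
    have hx : ext b k s true (m+1) = min b ((extAux b k s true (m+1)).2 + 1) := by
      rw [ext, if_neg (by omega : ¬ m + 1 ≤ k), if_pos (by rw [hsum]; simpa using hev)]
    have hle : s (m+1) ≤ min b ((Finset.range (m+1)).sup s + 1) :=
      le_min (hs.2 _ hj) (hs.1.2 m hj)
    have hne' : s (m+1) ≠ min b ((Finset.range (m+1)).sup s + 1) := by
      rw [← hsup, ← hx]; exact hne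
    rw [hx, hsup]
    exact lt_of_le_of_ne hle hne'
  · right
    refine ⟨Nat.not_even_iff_odd.mp hev, ?_⟩
    have hz : ext b k s true (m+1) = 0 := by
      rw [ext, if_neg (by omega : ¬ m + 1 ≤ k), if_neg (by rw [hsum]; simpa using hev)]
    rw [hz]
    rw [hz] at hne
    omega

lemma ext_min_lt (n b k : ℕ) (t : ℕ → ℕ) (ht : InRnb n b t) (j : ℕ) (hj : j < n)
    (hne : t j ≠ ext b k t false j) (hpre : ∀ i < j, t i = ext b k t false i) :
    rgcLt n (ext b k t false) t := by
  have hjk : k < j := by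
    by_contra h
    exact hne (ext_agree b k t false j (by omega)).symm
  have hsum : (extAux b k t false j).1 = ∑ i ∈ Finset.range j, t i := by
    rw [extAux_fst]
    exact Finset.sum_congr rfl (fun i hi => (hpre i (Finset.mem_range.mp hi)).symm)
  have hsup : (extAux b k t false j).2 = (Finset.range j).sup t := by
    rw [extAux_snd]
    exact Finset.sup_congr rfl (fun i hi => (hpre i (Finset.mem_range.mp hi)).symm)
  have hsum' : ∑ i ∈ Finset.range j, ext b k t false i = ∑ i ∈ Finset.range j, t i := by
    rw [← extAux_fst, hsum]
  obtain ⟨m, rfl⟩ : ∃ m, j = m + 1 := ⟨j - 1, by omega⟩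
  refine ⟨m+1, hj, fun i hi => (hpre i hi).symm, ?_⟩
  by_cases hev : Even (∑ i ∈ Finset.range (m+1), t i)
  · left
    have hz : ext b k t false (m+1) = 0 := by
      rw [ext, if_neg (by omega : ¬ m + 1 ≤ k), if_neg (by rw [hsum]; simpa using hev)]
    refine ⟨by rw [hsum']; exact hev, ?_⟩
    rw [hz]
    rw [hz] at hne
    omega
  · right
    refine ⟨by rw [hsum']; exact Nat.not_even_iff_odd.mp hev, ?_⟩
    have hx : ext b k t false (m+1) = min b ((extAux b k t false (m+1)).2 + 1) := by
      rw [ext, if_neg (by omega : ¬ m + 1 ≤ k), if_pos (by rw [hsum]; simpa using hev)]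
    have hle : t (m+1) ≤ min b ((Finset.range (m+1)).sup t + 1) :=
      le_min (ht.2 _ hj) (ht.1.2 m hj)
    have hne' : t (m+1) ≠ min b ((Finset.range (m+1)).sup t + 1) := by
      rw [← hsup, ← hx]; exact hne
    rw [hx, hsup]
    exact lt_of_le_of_ne hle hne'

/-- for odd `b`, if `s ≺ t` are consecutive in `R_n(b)` and `k` is the
first differing position with `k ≤ n - 3` (in 1-indexed terms), then both `s` and `t`
vanish from position `k + 3` on. -/
theorem stmt16 (n b : ℕ) (hbodd : Odd b) (hb1 : 1 ≤ b) (hn : 1 ≤ n)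
    (s t : ℕ → ℕ) (hs : InRnb n b s) (ht : InRnb n b t) (hst : rgcLt n s t)
    (hcons : ¬ ∃ u, InRnb n b u ∧ rgcLt n s u ∧ rgcLt n u t)
    (k : ℕ) (hkn : k + 4 ≤ n) (hkpre : ∀ i < k, s i = t i) (hkd : s k ≠ t k) :
    ∀ i, k + 3 ≤ i → i < n → s i = 0 ∧ t i = 0 := by
  classical
  obtain ⟨k', hk'n, hpre', hdisj⟩ := hst
  have hkk : k' = k := by
    rcases lt_trichotomy k' k with h | h | h
    · exfalso
      have := hkpre k' h
      rcases hdisj with ⟨_, h2⟩ | ⟨_, h2⟩ <;> omega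
    · exact h
    · exact absurd (hpre' k h) hkd
  subst hkk
  have hkn' : k' < n := by omega
  have hsu : ∀ j < n, s j = ext b k' s true j := by
    by_contra h
    push_neg at h
    have hex : ∃ j, j < n ∧ s j ≠ ext b k' s true j := by
      obtain ⟨j, hjn, hne⟩ := h; exact ⟨j, hjn, hne⟩
    obtain ⟨hj0n, hj0ne⟩ := Nat.find_spec hex
    have hpre0 : ∀ i < Nat.find hex, s i = ext b k' s true i := by
      intro i hi
      by_contra hne'
      exact Nat.find_min hex hi ⟨by omega, hne'⟩
    have h1 : rgcLt n s (ext b k' s true) :=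
      ext_max_lt n b k' s hs _ hj0n hj0ne hpre0
    have h2 : rgcLt n (ext b k' s true) t := by
      refine ⟨k', hkn', ?_, ?_⟩
      · intro i hi
        rw [ext_agree b k' s true i (le_of_lt hi)]
        exact hkpre i hi
      · have hsum : ∑ i ∈ Finset.range k', ext b k' s true i
            = ∑ i ∈ Finset.range k', s i :=
          Finset.sum_congr rfl
            (fun i hi => ext_agree b k' s true i (le_of_lt (Finset.mem_range.mp hi)))
        have huk : ext b k' s true k' = s k' := ext_agree b k' s true k' le_rfl
        rw [hsum, huk]
        exact hdisj
    exact hcons ⟨ext b k' s true, ext_mem n b k' s true hs hb1 hkn', h1, h2⟩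
  have htv : ∀ j < n, t j = ext b k' t false j := by
    by_contra h
    push_neg at h
    have hex : ∃ j, j < n ∧ t j ≠ ext b k' t false j := by
      obtain ⟨j, hjn, hne⟩ := h; exact ⟨j, hjn, hne⟩
    obtain ⟨hj0n, hj0ne⟩ := Nat.find_spec hex
    have hpre0 : ∀ i < Nat.find hex, t i = ext b k' t false i := by
      intro i hi
      by_contra hne'
      exact Nat.find_min hex hi ⟨by omega, hne'⟩
    have h2 : rgcLt n (ext b k' t false) t :=
      ext_min_lt n b k' t ht _ hj0n hj0ne hpre0
    have h1 : rgcLt n s (ext b k' t false) := by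
      refine ⟨k', hkn', ?_, ?_⟩
      · intro i hi
        rw [hkpre i hi]
        exact (ext_agree b k' t false i (le_of_lt hi)).symm
      · have hvk : ext b k' t false k' = t k' := ext_agree b k' t false k' le_rfl
        rw [hvk]
        exact hdisj
    exact hcons ⟨ext b k' t false, ext_mem n b k' t false ht hb1 hkn', h1, h2⟩
  intro i h3 hin
  constructor
  · rw [hsu i hin]; exact ext_zeros b k' s true hbodd i h3
  · rw [htv i hin]; exact ext_zeros b k' t false hbodd i h3
end

section
/- If s ≺ t are consecutive in the ≺-ordered list of R_n(b) and k is the first position where they differ, then |s_k - t_k| = 1. -/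
lemma mem_helper (n b k : ℕ) (s t : ℕ → ℕ) (hs : InRnb n b s) (ht : InRnb n b t)
    (hkpre : ∀ i < k, s i = t i) (m : ℕ) (hm : m ≤ max (s k) (t k)) (hk0 : 0 < k) :
    InRnb n b (fun i => if i < k then s i else if i = k then m else 0) := by
  set u : ℕ → ℕ := fun i => if i < k then s i else if i = k then m else 0 with hu
  have hsup : ∀ j, j ≤ k → (Finset.range j).sup u = (Finset.range j).sup s := by
    intro j hj
    apply Finset.sup_congr rfl
    intro i hi
    simp only [Finset.mem_range] at hi
    simp [hu, lt_of_lt_of_le hi hj]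
  refine ⟨⟨?_, ?_⟩, ?_⟩
  · simp only [hu, if_pos hk0]
    exact hs.1.1
  · intro i hi
    rcases lt_trichotomy (i+1) k with h | h | h
    · have he : u (i+1) = s (i+1) := by simp [hu, h]
      rw [he, hsup (i+1) (le_of_lt h)]
      exact hs.1.2 i hi
    · have he : u (i+1) = m := by simp [hu, h]
      rw [he, hsup (i+1) (le_of_eq h)]
      rcases max_cases (s k) (t k) with ⟨hmx, _⟩ | ⟨hmx, _⟩
      · rw [hmx] at hm
        calc m ≤ s k := hm
          _ ≤ _ := by rw [← h]; exact hs.1.2 i hi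
      · rw [hmx] at hm
        have hst : (Finset.range (i+1)).sup s = (Finset.range (i+1)).sup t := by
          apply Finset.sup_congr rfl
          intro j hj
          simp only [Finset.mem_range] at hj
          exact hkpre j (h ▸ hj)
        calc m ≤ t k := hm
          _ ≤ _ := by rw [hst, ← h]; exact ht.1.2 i hi
    · have he : u (i+1) = 0 := by
        simp only [hu]
        rw [if_neg (by omega), if_neg (by omega)]
      rw [he]; exact Nat.zero_le _
  · intro i hi
    by_cases h1 : i < k
    · simpa [hu, h1] using hs.2 i hi
    by_cases h2 : i = k
    · simp only [hu, if_neg h1, if_pos h2]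
      exact hm.trans (max_le (hs.2 k (h2 ▸ hi)) (ht.2 k (h2 ▸ hi)))
    · simp only [hu, if_neg h1, if_neg h2]
      exact Nat.zero_le _


/-- consecutive elements of `R_n(b)` in `≺` order differ by exactly
1 at the first differing position. -/
theorem stmt17 (n b : ℕ) (hb1 : 1 ≤ b)
    (s t : ℕ → ℕ) (hs : InRnb n b s) (ht : InRnb n b t) (hst : rgcLt n s t)
    (hcons : ¬ ∃ u, InRnb n b u ∧ rgcLt n s u ∧ rgcLt n u t)
    (k : ℕ) (hkn : k < n) (hkpre : ∀ i < k, s i = t i) (hkd : s k ≠ t k) :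
    s k = t k + 1 ∨ t k = s k + 1 := by
  by_contra hne
  push_neg at hne
  obtain ⟨hne1, hne2⟩ := hne
  obtain ⟨k', hk'n, hpre', hcase⟩ := hst
  have hsk' : s k' ≠ t k' := by rcases hcase with ⟨_, h⟩ | ⟨_, h⟩ <;> omega
  have hkk : k' = k := by
    rcases lt_trichotomy k' k with h | h | h
    · exact absurd (hkpre k' h) hsk'
    · exact h
    · exact absurd (hpre' k h) hkd
  subst hkk
  have hk0 : 0 < k' := by
    rcases Nat.eq_zero_or_pos k' with h | h
    · subst h; exact absurd (hs.1.1.trans ht.1.1.symm) hkd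
    · exact h
  apply hcons
  rcases hcase with ⟨hpar, hlt⟩ | ⟨hpar, hlt⟩
  · -- even, s k' < t k', set m = s k' + 1, and s k' + 1 < t k'
    have hlt2 : s k' + 1 < t k' := by omega
    set m := s k' + 1 with hmdef
    have hm : m ≤ max (s k') (t k') := le_trans (by omega) (le_max_right _ _)
    have hu := mem_helper n b k' s t hs ht hpre' m hm hk0
    set u : ℕ → ℕ := fun i => if i < k' then s i else if i = k' then m else 0 with hudef
    have hsum : ∑ i ∈ Finset.range k', u i = ∑ i ∈ Finset.range k', s i := by
      apply Finset.sum_congr rfl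
      intro i hi
      simp only [Finset.mem_range] at hi
      simp [hudef, hi]
    have huk : u k' = m := by simp [hudef]
    refine ⟨u, hu, ⟨k', hk'n, fun i hi => by simp [hudef, hi], Or.inl ⟨hpar, ?_⟩⟩,
      ⟨k', hk'n, fun i hi => by simp [hudef, hi, hpre' i hi], Or.inl ⟨?_, ?_⟩⟩⟩
    · rw [huk]; omega
    · rwa [hsum]
    · rw [huk]; omega
  · -- odd, t k' < s k', set m = t k' + 1, t k' + 1 < s k'
    have hlt2 : t k' + 1 < s k' := by omega
    set m := t k' + 1 with hmdef
    have hm : m ≤ max (s k') (t k') := le_trans (by omega) (le_max_left _ _)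
    have hu := mem_helper n b k' s t hs ht hpre' m hm hk0
    set u : ℕ → ℕ := fun i => if i < k' then s i else if i = k' then m else 0 with hudef
    have hsum : ∑ i ∈ Finset.range k', u i = ∑ i ∈ Finset.range k', s i := by
      apply Finset.sum_congr rfl
      intro i hi
      simp only [Finset.mem_range] at hi
      simp [hudef, hi]
    have huk : u k' = m := by simp [hudef]
    refine ⟨u, hu, ⟨k', hk'n, fun i hi => by simp [hudef, hi], Or.inr ⟨hpar, ?_⟩⟩,
      ⟨k', hk'n, fun i hi => by simp [hudef, hi, hpre' i hi], Or.inr ⟨?_, ?_⟩⟩⟩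
    · rw [huk]; omega
    · rwa [hsum]
    · rw [huk]; omega
end

section
/- Both the Reflected Gray Code Order and the co-Reflected Gray Code Order are prefix-partitioning: in the ordered list of any set S of length-n sequences, all sequences of S sharing a common prefix appear consecutively. Equivalently, if s < u < t in either order and s, t share a prefix p, then u also has prefix p. -/
lemma gen_key (n : ℕ) (P : (ℕ → ℕ) → ℕ → Prop)
    (hP : ∀ a b k, (∀ i < k, a i = b i) → (P a k ↔ P b k))
    (s t u : ℕ → ℕ) (j : ℕ) (hpre : ∀ i < j, s i = t i)
    (h1 : ∃ k < n, (∀ i < k, s i = u i) ∧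
      ((P s k ∧ s k < u k) ∨ (¬ P s k ∧ u k < s k)))
    (h2 : ∃ k < n, (∀ i < k, u i = t i) ∧
      ((P u k ∧ u k < t k) ∨ (¬ P u k ∧ t k < u k))) :
    ∀ i < j, u i = s i := by
  obtain ⟨k, hkn, hsu, hc1⟩ := h1
  obtain ⟨k', hk'n, hut, hc2⟩ := h2
  intro i hi
  by_contra hne
  have hki : k ≤ i := by
    by_contra h
    exact hne (hsu i (Nat.lt_of_not_le h)).symm
  have hkj : k < j := lt_of_le_of_lt hki hi
  have hsune : s k ≠ u k := by
    rcases hc1 with ⟨_, h⟩ | ⟨_, h⟩ <;> omega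
  have hutne : u k' ≠ t k' := by
    rcases hc2 with ⟨_, h⟩ | ⟨_, h⟩ <;> omega
  have hkk : k' = k := by
    rcases lt_trichotomy k' k with h | h | h
    · exact absurd ((hsu k' h).symm.trans (hpre k' (h.trans hkj))) hutne
    · exact h
    · exact absurd ((hut k h).trans (hpre k hkj).symm).symm hsune
  rw [hkk] at hc2
  have hPeq : P s k ↔ P u k := hP s u k hsu
  have htk : t k = s k := (hpre k hkj).symm
  rcases hc1 with ⟨hp1, h1⟩ | ⟨hp1, h1⟩ <;>
    rcases hc2 with ⟨hp2, h2⟩ | ⟨hp2, h2⟩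
  · omega
  · exact absurd (hPeq.mp hp1) hp2
  · exact absurd (hPeq.mpr hp2) hp1
  · omega

/-- both orders are prefix-partitioning on `{0,…,m-1}^n`: if `s < u < t`
and `s, t` share a length-`j` prefix, then `u` shares that prefix too. -/
theorem stmt18 (m n : ℕ) (hm : 2 ≤ m)
    (s t u : ℕ → ℕ) (hsm : ∀ i < n, s i < m) (htm : ∀ i < n, t i < m)
    (hum : ∀ i < n, u i < m) (j : ℕ) (hj : j ≤ n) (hpre : ∀ i < j, s i = t i) :
    (rgcLt n s u → rgcLt n u t → ∀ i < j, u i = s i) ∧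
    (coRgcLt n s u → coRgcLt n u t → ∀ i < j, u i = s i) := by
  constructor
  · intro h1 h2
    refine gen_key n (fun a k => Even (∑ i ∈ Finset.range k, a i)) ?_ s t u j hpre ?_ ?_
    · intro a b k hab
      have : ∑ i ∈ Finset.range k, a i = ∑ i ∈ Finset.range k, b i :=
        Finset.sum_congr rfl (fun i hi => hab i (Finset.mem_range.mp hi))
      exact iff_of_eq (congrArg Even this)
    · obtain ⟨k, hk, hpr, hc⟩ := h1
      exact ⟨k, hk, hpr, hc.imp id (fun ⟨ho, hl⟩ => ⟨Nat.not_even_iff_odd.mpr ho, hl⟩)⟩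
    · obtain ⟨k, hk, hpr, hc⟩ := h2
      exact ⟨k, hk, hpr, hc.imp id (fun ⟨ho, hl⟩ => ⟨Nat.not_even_iff_odd.mpr ho, hl⟩)⟩
  · intro h1 h2
    refine gen_key n (fun a k => Even (Uval a k)) ?_ s t u j hpre ?_ ?_
    · intro a b k hab
      have : Uval a k = Uval b k := by
        unfold Uval
        apply Finset.card_bij (fun i _ => i)
        · intro i hi
          simp only [Finset.mem_filter, Finset.mem_range] at hi ⊢
          rw [← hab i hi.1]; exact hi
        · intro a' b' _ _ h; exact h
        · intro i hi
          simp only [Finset.mem_filter, Finset.mem_range] at hi ⊢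
          exact ⟨i, by rw [hab i hi.1]; exact hi, rfl⟩
      exact iff_of_eq (congrArg Even this)
    · obtain ⟨k, hk, hpr, hc⟩ := h1
      exact ⟨k, hk, hpr, hc.imp id (fun ⟨ho, hl⟩ => ⟨Nat.not_even_iff_odd.mpr ho, hl⟩)⟩
    · obtain ⟨k, hk, hpr, hc⟩ := h2
      exact ⟨k, hk, hpr, hc.imp id (fun ⟨ho, hl⟩ => ⟨Nat.not_even_iff_odd.mpr ho, hl⟩)⟩
end
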